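/- arXiv:1707.02149 — 4 statements merged into one kernel-verified Lean document; each statement's English description precedes it below -/
import Mathlib

section
/- Let N = (N_t)_{t≥0} be a counting process with arrival times T_n = W_1 + ⋯ + W_n (T_0 = 0, W_n > 0) and no explosion, let X = (X_n) be a sequence of positive random variables (claim sizes), and let S_t = Σ_{k=1}^{N_t} X_k be the aggregate claims process with natural filtration F_t = σ(S_u : u ≤ t). Then for every t ≥ 0 and n ∈ ℕ₀, the trace σ-algebras satisfy F_t ∩ {N_t = n} = σ(σ(W_1,…,W_n) ∪ σ(X_1,…,X_n)) ∩ {N_t = n}. -/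
/-!
On `{N t = n}` and for `u ≤ t`, the aggregate claim is `S u = ∑_{k<n} 1{T (k+1) ≤ u} X k`, a
function of `W 0, …, W (n-1), X 0, …, X (n-1)`. Conversely, since the claims are positive, the path
`u ↦ S u` on `[0, t]` is a step function with exactly `n` strict jumps, and its successive levels
and jump times are countable infima over the rationals of `[0, t]` together with `t`; the
increments of these recover `X k` and `W k`, so they are `F t`-measurable on that event.
Trace σ-algebras are handled as comaps along the inclusion of the event.
-/

open MeasureTheory Set

section Trace

variable {Ω β : Type*}

theorem setOf_inter_eq_of_comap_subtype_eq {m₁ m₂ : MeasurableSpace Ω} {E : Set Ω}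
    (h : m₁.comap ((↑) : E → Ω) = m₂.comap (↑)) :
    {A | ∃ B, MeasurableSet[m₁] B ∧ A = B ∩ E} = {A | ∃ C, MeasurableSet[m₂] C ∧ A = C ∩ E} := by
  have traces_eq_image : ∀ m : MeasurableSpace Ω, {A | ∃ B, MeasurableSet[m] B ∧ A = B ∩ E} =
      image ((↑) : E → Ω) '' {s | MeasurableSet[m.comap (↑)] s} := by
    intro m
    ext A
    simp only [mem_ofPred_eq, mem_image, MeasurableSpace.measurableSet_comap]
    constructor
    · rintro ⟨B, hB, rfl⟩
      exact ⟨_, ⟨B, hB, rfl⟩, by rw [Subtype.image_preimage_coe, inter_comm]⟩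
    · rintro ⟨_, ⟨B, hB, rfl⟩, rfl⟩
      exact ⟨B, hB, by rw [Subtype.image_preimage_coe, inter_comm]⟩
  rw [traces_eq_image, traces_eq_image, h]

theorem comap_subtype_le_of_eqOn [MeasurableSpace β] {m : MeasurableSpace Ω} {E : Set Ω}
    {f g : Ω → β} (hg : Measurable[m] g) (hfg : EqOn f g E) :
    (MeasurableSpace.comap f ‹_›).comap ((↑) : E → Ω) ≤ m.comap (↑) := by
  have : f ∘ ((↑) : E → Ω) = g ∘ (↑) := funext fun x => hfg x.2
  rw [MeasurableSpace.comap_comp, this, ← MeasurableSpace.comap_comp]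
  exact MeasurableSpace.comap_mono hg.comap_le

theorem measurable_iSup₂_comap [MeasurableSpace β] {ι : Type*} {p : ι → Prop} {f : ι → Ω → β}
    {i : ι} (hi : p i) : Measurable[⨆ j, ⨆ (_ : p j), MeasurableSpace.comap (f j) ‹_›] (f i) :=
  measurable_iff_comap_le.2 (le_iSup₂ (f := fun j (_ : p j) => MeasurableSpace.comap (f j) _) i hi)

end Trace

theorem strictMono_sum_range_of_pos {f : ℕ → ℝ} (hf : ∀ k, 0 < f k) :
    StrictMono fun m => ∑ k ∈ Finset.range m, f k :=
  strictMono_nat_of_lt_succ fun m => by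
    simpa only [Finset.sum_range_succ] using lt_add_of_pos_right _ (hf m)

def IsCountingFn (τ : ℕ → ℝ) (N : ℝ → ℕ) : Prop :=
  ∀ u, 0 ≤ u → τ (N u) ≤ u ∧ u < τ (N u + 1)

namespace IsCountingFn

variable {τ : ℕ → ℝ} {N : ℝ → ℕ}

theorem le_iff (hN : IsCountingFn τ N) (hτ : Monotone τ) {u : ℝ} (hu : 0 ≤ u) (m : ℕ) :
    m ≤ N u ↔ τ m ≤ u := by
  refine ⟨fun hm => (hτ hm).trans (hN u hu).1, fun hm => ?_⟩
  by_contra! hlt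
  exact (hN u hu).2.not_ge ((hτ hlt).trans hm)

theorem mono (hN : IsCountingFn τ N) (hτ : Monotone τ) {u u' : ℝ} (hu : 0 ≤ u) (huu' : u ≤ u') :
    N u ≤ N u' :=
  (hN.le_iff hτ (hu.trans huu') _).2 (((hN.le_iff hτ hu _).1 le_rfl).trans huu')

theorem eq_of_mem_Ico (hN : IsCountingFn τ N) (hτ : Monotone τ) {u : ℝ} (hu : 0 ≤ u) {m : ℕ}
    (hum : u ∈ Ico (τ m) (τ (m + 1))) : N u = m :=
  le_antisymm (Nat.lt_succ_iff.1 (not_le.1 fun h => (hN.le_iff hτ hu _ |>.1 h).not_gt hum.2))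
    ((hN.le_iff hτ hu m).2 hum.1)

theorem sum_range_eq_sum_ite (hN : IsCountingFn τ N) (hτ : Monotone τ) {u : ℝ} (hu : 0 ≤ u)
    {n : ℕ} (hn : N u ≤ n) (x : ℕ → ℝ) :
    ∑ k ∈ Finset.range (N u), x k = ∑ k ∈ Finset.range n, if τ (k + 1) ≤ u then x k else 0 := by
  rw [← Finset.sum_filter]
  congr 1
  ext k
  rw [Finset.mem_filter, Finset.mem_range, Finset.mem_range, ← hN.le_iff hτ hu, Nat.succ_le_iff]
  exact ⟨fun hk => ⟨hk.trans_le hn, hk⟩, And.right⟩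

end IsCountingFn

def IsRightDenseIn (e : ℕ → ℝ) (t : ℝ) : Prop :=
  (∀ k, e k ∈ Icc 0 t) ∧ ∀ a ∈ Icc 0 t, ∀ b, a < b → ∃ k, e k ∈ Ico a b

theorem exists_isRightDenseIn {t : ℝ} (ht : 0 ≤ t) : ∃ e, IsRightDenseIn e t := by
  have hcount : ({t} ∪ Icc 0 t ∩ range ((↑) : ℚ → ℝ)).Countable :=
    (countable_singleton t).union ((countable_range _).mono inter_subset_right)
  obtain ⟨e, he⟩ := hcount.exists_eq_range (singleton_nonempty t).inl
  refine ⟨e, fun k => ?_, fun a ha b hab => ?_⟩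
  · rcases (he.symm ▸ mem_range_self k : e k ∈ _) with hk | hk
    · rw [mem_singleton_iff.1 hk]
      exact ⟨ht, le_rfl⟩
    · exact hk.1
  · have mem_range_e : ∀ s ∈ ({t} ∪ Icc 0 t ∩ range ((↑) : ℚ → ℝ)), ∃ k, e k = s := by
      rw [he]
      exact fun s hs => hs
    rcases ha.2.eq_or_lt with rfl | hat
    · obtain ⟨k, hk⟩ := mem_range_e a (Or.inl rfl)
      exact ⟨k, by rw [hk]; exact ⟨le_rfl, hab⟩⟩
    · obtain ⟨q, haq, hqb⟩ := exists_rat_btwn (lt_min hab hat)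
      obtain ⟨k, hk⟩ := mem_range_e q
        (Or.inr ⟨⟨ha.1.trans haq.le, hqb.le.trans (min_le_right _ _)⟩, q, rfl⟩)
      exact ⟨k, by rw [hk]; exact ⟨haq.le, hqb.trans_le (min_le_left _ _)⟩⟩

-- A sample time at which `p` has not yet exceeded the current level contributes `p t`, resp. `t`,
-- which bound the next level, resp. jump time, from above on the paths of interest.
noncomputable def jumpLevel (p : ℝ → ℝ) (e : ℕ → ℝ) (t : ℝ) : ℕ → ℝ
  | 0 => 0
  | m + 1 => ⨅ k, if jumpLevel p e t m < p (e k) then p (e k) else p t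

noncomputable def jumpTime (p : ℝ → ℝ) (e : ℕ → ℝ) (t : ℝ) : ℕ → ℝ
  | 0 => 0
  | m + 1 => ⨅ k, if jumpLevel p e t m < p (e k) then e k else t

section Reconstruction

variable {τ v : ℕ → ℝ} {N : ℝ → ℕ} {e : ℕ → ℝ} {t : ℝ}

theorem jumpLevel_eq (hN : IsCountingFn τ N) (hτ : StrictMono τ) (hτ0 : τ 0 = 0)
    (hv : StrictMono v) (hv0 : v 0 = 0) (he : IsRightDenseIn e t) (ht : 0 ≤ t) :
    ∀ m ≤ N t, jumpLevel (fun u => v (N u)) e t m = v m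
  | 0, _ => hv0.symm
  | m + 1, hm => by
    have hτm : τ (m + 1) ∈ Icc 0 t :=
      ⟨hτ0 ▸ hτ.monotone (Nat.zero_le _), (hN.le_iff hτ.monotone ht _).1 hm⟩
    rw [jumpLevel, jumpLevel_eq hN hτ hτ0 hv hv0 he ht m (Nat.le_of_succ_le hm)]
    refine ciInf_eq_of_forall_ge_of_forall_gt_exists_lt (fun k => ?_) fun w hw => ?_
    · split_ifs with hk
      · exact hv.monotone (hv.lt_iff_lt.1 hk)
      · exact hv.monotone hm
    · obtain ⟨k, hk⟩ := he.2 _ hτm _ (hτ (Nat.lt_succ_self _))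
      have hNk : N (e k) = m + 1 := hN.eq_of_mem_Ico hτ.monotone (he.1 k).1 hk
      refine ⟨k, ?_⟩
      simp only [hNk, if_pos (hv (Nat.lt_succ_self m)), hw]

theorem jumpTime_eq (hN : IsCountingFn τ N) (hτ : StrictMono τ) (hτ0 : τ 0 = 0)
    (hv : StrictMono v) (hv0 : v 0 = 0) (he : IsRightDenseIn e t) (ht : 0 ≤ t) :
    ∀ m ≤ N t, jumpTime (fun u => v (N u)) e t m = τ m
  | 0, _ => hτ0.symm
  | m + 1, hm => by
    have hτm : τ (m + 1) ∈ Icc 0 t :=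
      ⟨hτ0 ▸ hτ.monotone (Nat.zero_le _), (hN.le_iff hτ.monotone ht _).1 hm⟩
    rw [jumpTime, jumpLevel_eq hN hτ hτ0 hv hv0 he ht m (Nat.le_of_succ_le hm)]
    refine ciInf_eq_of_forall_ge_of_forall_gt_exists_lt (fun k => ?_) fun w hw => ?_
    · split_ifs with hk
      · exact (hN.le_iff hτ.monotone (he.1 k).1 _).1 (hv.lt_iff_lt.1 hk)
      · exact hτm.2
    · obtain ⟨k, hk⟩ := he.2 _ hτm _ hw
      have hNk : m + 1 ≤ N (e k) := (hN.le_iff hτ.monotone (he.1 k).1 _).2 hk.1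
      exact ⟨k, by rw [if_pos (hv.lt_iff_lt.2 hNk)]; exact hk.2⟩

end Reconstruction

theorem measurable_jumpLevel {Ω : Type*} {mΩ : MeasurableSpace Ω} {S : ℝ → Ω → ℝ} {e : ℕ → ℝ}
    {t : ℝ} (hSe : ∀ k, Measurable (S (e k))) (hSt : Measurable (S t)) :
    ∀ m, Measurable fun ω => jumpLevel (fun u => S u ω) e t m
  | 0 => measurable_const
  | m + 1 => Measurable.iInf fun k =>
      Measurable.ite (measurableSet_lt (measurable_jumpLevel hSe hSt m) (hSe k)) (hSe k) hSt

theorem measurable_jumpTime {Ω : Type*} {mΩ : MeasurableSpace Ω} {S : ℝ → Ω → ℝ} {e : ℕ → ℝ}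
    {t : ℝ} (hSe : ∀ k, Measurable (S (e k))) (hSt : Measurable (S t)) :
    ∀ m, Measurable fun ω => jumpTime (fun u => S u ω) e t m
  | 0 => measurable_const
  | m + 1 => Measurable.iInf fun k =>
      Measurable.ite (measurableSet_lt (measurable_jumpLevel hSe hSt m) (hSe k)) measurable_const
        measurable_const

section AggregateClaims

variable {Ω : Type*} {W X : ℕ → Ω → ℝ} {N : ℝ → Ω → ℕ}

theorem comap_subtype_aggregate_le
    (hτ : ∀ ω, Monotone fun m => ∑ k ∈ Finset.range m, W k ω)
    (hN : ∀ ω, IsCountingFn (fun m => ∑ k ∈ Finset.range m, W k ω) (N · ω))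
    {u t : ℝ} (hu : 0 ≤ u) (hut : u ≤ t) (n : ℕ) :
    (MeasurableSpace.comap (fun ω => ∑ k ∈ Finset.range (N u ω), X k ω) inferInstance).comap
        ((↑) : {ω | N t ω = n} → Ω) ≤
      ((⨆ j ∈ Finset.range n, MeasurableSpace.comap (W j) inferInstance) ⊔
        (⨆ j ∈ Finset.range n, MeasurableSpace.comap (X j) inferInstance)).comap (↑) := by
  refine comap_subtype_le_of_eqOn (g := fun ω => ∑ k ∈ Finset.range n,
    if ∑ j ∈ Finset.range (k + 1), W j ω ≤ u then X k ω else 0) ?_ fun ω hω => ?_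
  · refine Finset.measurable_sum _ fun k hk => Measurable.ite (measurableSet_le
      (Finset.measurable_sum _ fun j hj => ?_) measurable_const) ?_ measurable_const
    · exact (measurable_iSup₂_comap (Finset.mem_range.2 ((Finset.mem_range.1 hj).trans_le
        (Finset.mem_range.1 hk)))).mono le_sup_left le_rfl
    · exact (measurable_iSup₂_comap hk).mono le_sup_right le_rfl
  · exact (hN ω).sum_range_eq_sum_ite (hτ ω) hu (hω ▸ (hN ω).mono (hτ ω) hu hut) _

theorem comap_subtype_le_aggregate
    (hτ : ∀ ω, StrictMono fun m => ∑ k ∈ Finset.range m, W k ω)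
    (hv : ∀ ω, StrictMono fun m => ∑ k ∈ Finset.range m, X k ω)
    (hN : ∀ ω, IsCountingFn (fun m => ∑ k ∈ Finset.range m, W k ω) (N · ω))
    {t : ℝ} (ht : 0 ≤ t) (n : ℕ) :
    ((⨆ j ∈ Finset.range n, MeasurableSpace.comap (W j) inferInstance) ⊔
        (⨆ j ∈ Finset.range n, MeasurableSpace.comap (X j) inferInstance)).comap
        ((↑) : {ω | N t ω = n} → Ω) ≤
      (⨆ u ∈ Icc 0 t, MeasurableSpace.comap (fun ω => ∑ k ∈ Finset.range (N u ω), X k ω)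
        inferInstance).comap (↑) := by
  obtain ⟨e, he⟩ := exists_isRightDenseIn ht
  have hS : ∀ u ∈ Icc 0 t, Measurable[⨆ u ∈ Icc 0 t, MeasurableSpace.comap
      (fun ω => ∑ k ∈ Finset.range (N u ω), X k ω) inferInstance]
      (fun ω => ∑ k ∈ Finset.range (N u ω), X k ω) := fun u hu => measurable_iSup₂_comap hu
  have hjT := measurable_jumpTime (S := fun u ω => ∑ k ∈ Finset.range (N u ω), X k ω)
    (fun k => hS _ (he.1 k)) (hS t ⟨ht, le_rfl⟩)
  have hjL := measurable_jumpLevel (S := fun u ω => ∑ k ∈ Finset.range (N u ω), X k ω)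
    (fun k => hS _ (he.1 k)) (hS t ⟨ht, le_rfl⟩)
  conv_lhs => simp only [MeasurableSpace.comap_sup, MeasurableSpace.comap_iSup]
  refine sup_le (iSup₂_le fun j hj => comap_subtype_le_of_eqOn ((hjT (j + 1)).sub (hjT j))
    fun ω hω => ?_) (iSup₂_le fun j hj => comap_subtype_le_of_eqOn ((hjL (j + 1)).sub (hjL j))
    fun ω hω => ?_) <;> rw [Finset.mem_range, ← hω.out] at hj <;> simp only [Pi.sub_apply]
  · rw [jumpTime_eq (hN ω) (hτ ω) rfl (hv ω) rfl he ht _ hj,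
      jumpTime_eq (hN ω) (hτ ω) rfl (hv ω) rfl he ht _ hj.le, Finset.sum_range_succ]
    ring
  · rw [jumpLevel_eq (hN ω) (hτ ω) rfl (hv ω) rfl he ht _ hj,
      jumpLevel_eq (hN ω) (hτ ω) rfl (hv ω) rfl he ht _ hj.le, Finset.sum_range_succ]
    ring

end AggregateClaims

theorem stmt_3_general {Ω : Type*}
    (W X : ℕ → Ω → ℝ)
    (hWpos : ∀ n ω, 0 < W n ω) (hXpos : ∀ n ω, 0 < X n ω)
    (T : ℕ → Ω → ℝ) (hT : ∀ n ω, T n ω = ∑ k ∈ Finset.range n, W k ω)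
    (N : ℝ → Ω → ℕ)
    (hN : ∀ t ω, 0 ≤ t → T (N t ω) ω ≤ t ∧ t < T (N t ω + 1) ω)
    (S : ℝ → Ω → ℝ) (hS : ∀ t ω, S t ω = ∑ k ∈ Finset.range (N t ω), X k ω)
    (F : ℝ → MeasurableSpace Ω)
    (hF : ∀ t, F t = ⨆ u ∈ Set.Icc (0 : ℝ) t, MeasurableSpace.comap (S u) inferInstance)
    (t : ℝ) (ht : 0 ≤ t) (n : ℕ) :
    {A : Set Ω | ∃ B : Set Ω, MeasurableSet[F t] B ∧ A = B ∩ {ω | N t ω = n}} =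
    {A : Set Ω | ∃ C : Set Ω,
      MeasurableSet[(⨆ j ∈ Finset.range n, MeasurableSpace.comap (W j) inferInstance) ⊔
        (⨆ j ∈ Finset.range n, MeasurableSpace.comap (X j) inferInstance)] C ∧
      A = C ∩ {ω | N t ω = n}} := by
  obtain rfl : T = fun m ω => ∑ k ∈ Finset.range m, W k ω := funext₂ hT
  obtain rfl : S = fun u ω => ∑ k ∈ Finset.range (N u ω), X k ω := funext₂ hS
  have hτ ω := strictMono_sum_range_of_pos (hWpos · ω)
  have hcount ω : IsCountingFn (fun m => ∑ k ∈ Finset.range m, W k ω) (N · ω) :=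
    fun u hu => hN u ω hu
  apply setOf_inter_eq_of_comap_subtype_eq
  rw [hF]
  refine le_antisymm ?_ (comap_subtype_le_aggregate hτ
    (fun ω => strictMono_sum_range_of_pos (hXpos · ω)) hcount ht n)
  simp only [MeasurableSpace.comap_iSup]
  exact iSup₂_le fun u hu =>
    comap_subtype_aggregate_le (fun ω => (hτ ω).monotone) hcount hu.1 hu.2 n

/-- Lemma 1: the trace of the natural filtration `F_t` of the
aggregate claims process on the event `{N_t = n}` coincides with the trace of
`σ(σ(W_1,…,W_n) ∪ σ(X_1,…,X_n))`. -/
theorem stmt_3 {Ω : Type*} [MeasurableSpace Ω]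
    (W X : ℕ → Ω → ℝ)
    (hWm : ∀ n, Measurable (W n)) (hXm : ∀ n, Measurable (X n))
    (hWpos : ∀ n ω, 0 < W n ω) (hXpos : ∀ n ω, 0 < X n ω)
    (T : ℕ → Ω → ℝ) (hT : ∀ n ω, T n ω = ∑ k ∈ Finset.range n, W k ω)
    (hTunb : ∀ ω M, ∃ n, M < T n ω)
    (N : ℝ → Ω → ℕ)
    (hN : ∀ t ω, 0 ≤ t → T (N t ω) ω ≤ t ∧ t < T (N t ω + 1) ω)
    (S : ℝ → Ω → ℝ) (hS : ∀ t ω, S t ω = ∑ k ∈ Finset.range (N t ω), X k ω)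
    (F : ℝ → MeasurableSpace Ω)
    (hF : ∀ t, F t = ⨆ u ∈ Set.Icc (0 : ℝ) t, MeasurableSpace.comap (S u) inferInstance)
    (t : ℝ) (ht : 0 ≤ t) (n : ℕ) :
    {A : Set Ω | ∃ B : Set Ω, MeasurableSet[F t] B ∧ A = B ∩ {ω | N t ω = n}} =
    {A : Set Ω | ∃ C : Set Ω,
      MeasurableSet[(⨆ j ∈ Finset.range n, MeasurableSpace.comap (W j) inferInstance) ⊔
        (⨆ j ∈ Finset.range n, MeasurableSpace.comap (X j) inferInstance)] C ∧
      A = C ∩ {ω | N t ω = n}} :=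
  stmt_3_general W X hWpos hXpos T hT N hN S hS F hF t ht n
end

section
/- Let S be a compound renewal process under both P and Q (i.e., under each measure the interarrival times W are i.i.d., the claim sizes X are i.i.d., and W, X are independent), and let F_∞ be the terminal σ-algebra of S. Then the following are equivalent: (i) P and Q are equivalent on F_∞; (ii) P_{X_1} = Q_{X_1} and P_{W_1} = Q_{W_1}; (iii) P and Q coincide on F_∞. -/
/-!
The path of `S` determines every interarrival time and every claim size: the `k`-th renewal time
and the `k`-th level of the path are detected by chains of rational times along which `S`
strictly increases. So `F_∞` is the σ-algebra generated by `(W, X)`, and (ii) ⇒ (iii) because,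
by independence, the joint law of `(W, X)` is the product of the marginal laws. Conversely, if
`P` and `Q` have the same null sets on `F_∞`, the strong law of large numbers applied to the
indicators of `X n ∈ B` gives an `F_∞`-measurable event of full `P`-measure, hence of full
`Q`-measure, on which the empirical frequencies converge both to `P (X 0 ∈ B)` and to
`Q (X 0 ∈ B)`; likewise for `W`.
-/

open MeasureTheory ProbabilityTheory Set Filter Topology Finset

lemma biSup_Ici_biSup_Icc {ι α : Type*} [Preorder ι] [CompleteLattice α] (a : ι)
    (f : ι → α) :
    ⨆ t ∈ Ici a, ⨆ u ∈ Icc a t, f u = ⨆ u ∈ Ici a, f u :=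
  le_antisymm (iSup₂_le fun _ _ => iSup₂_le fun _ hu => le_biSup f hu.1)
    (iSup₂_le fun u hu => le_iSup₂_of_le u hu (le_biSup f ⟨hu, le_rfl⟩))

lemma Fin.val_le_of_strictMono {k : ℕ} {f : Fin (k + 1) → ℕ} (hf : StrictMono f)
    (i : Fin (k + 1)) : (i : ℕ) ≤ f i := by
  induction i using Fin.induction with
  | zero => exact Nat.zero_le _
  | succ i ih => exact ih.trans_lt (hf (Fin.castSucc_lt_succ (i := i)))

lemma strictMono_sum_range {f : ℕ → ℝ} (hf : ∀ n, 0 < f n) :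
    StrictMono fun n => ∑ k ∈ range n, f k :=
  strictMono_nat_of_lt_succ fun n => by simpa [sum_range_succ] using hf n

section

variable {Ω : Type*} {mΩ : MeasurableSpace Ω}

lemma measurableSet_setOf_strictMono {ι : Type*} [Preorder ι] [Countable ι]
    {f : ι → Ω → ℝ} (hf : ∀ i, Measurable (f i)) :
    MeasurableSet {ω | StrictMono fun i => f i ω} := by
  simp only [StrictMono, ofPred_forall]
  exact .iInter fun i => .iInter fun j => .iInter fun _ => measurableSet_lt (hf i) (hf j)

lemma measurable_apply_of_measurable_nat {β : Type*} [MeasurableSpace β] {f : ℕ → Ω → β}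
    {g : Ω → ℕ} (hf : ∀ n, Measurable (f n)) (hg : Measurable g) :
    Measurable fun ω => f (g ω) ω :=
  (measurable_from_prod_countable_left (f := fun p : Ω × ℕ => f p.2 p.1) hf).comp
    (measurable_id.prodMk hg)

end

namespace CompoundRenewal

section Path

variable {T C : ℕ → ℝ} {N : ℝ → ℕ}

lemma counting_eq_of_mem_Ico (hT : Monotone T)
    (hN : ∀ t, 0 ≤ t → T (N t) ≤ t ∧ t < T (N t + 1)) {t : ℝ} {k : ℕ} (ht : 0 ≤ t)
    (htk : t ∈ Ico (T k) (T (k + 1))) : N t = k := by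
  obtain ⟨h₁, h₂⟩ := hN t ht
  refine le_antisymm (not_lt.1 fun hk => ?_) (not_lt.1 fun hk => ?_)
  · exact (htk.2.trans_le (hT hk)).not_ge h₁
  · exact (h₂.trans_le (hT hk)).not_ge htk.1

lemma exists_counting_chain (hT : StrictMono T) (hT0 : 0 ≤ T 0)
    (hN : ∀ t, 0 ≤ t → T (N t) ≤ t ∧ t < T (N t + 1)) {k : ℕ} {c : ℝ} (hc : T k < c) :
    ∃ q : Fin (k + 1) → ℚ≥0, (∀ i, N (q i) = i) ∧ ∀ i, (q i : ℝ) < c := by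
  have hq : ∀ i : Fin (k + 1), ∃ q : ℚ≥0, T i < q ∧ (q : ℝ) < min (T (i + 1)) c := by
    intro i
    have hTi : T i < min (T (i + 1)) c :=
      lt_min (hT (Nat.lt_succ_self i)) ((hT.monotone (Fin.is_le i)).trans_lt hc)
    obtain ⟨r, h₁, h₂⟩ := exists_rat_btwn hTi
    have hr : (0 : ℚ) ≤ r := by
      exact_mod_cast (hT0.trans (hT.monotone (Nat.zero_le i))).trans h₁.le
    exact ⟨⟨r, hr⟩, by simpa using h₁, by simpa using h₂⟩
  choose q hq₁ hq₂ using hq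
  refine ⟨q, fun i => counting_eq_of_mem_Ico hT.monotone hN (by positivity)
    ⟨(hq₁ i).le, (hq₂ i).trans_le (min_le_left _ _)⟩,
    fun i => (hq₂ i).trans_le (min_le_right _ _)⟩

lemma le_counting_last_of_strictMono (hC : Monotone C) {k : ℕ} {q : Fin (k + 1) → ℝ}
    (h : StrictMono fun i => C (N (q i))) : k ≤ N (q (Fin.last k)) := by
  have hNq : StrictMono fun i => N (q i) := fun i j hij =>
    lt_of_not_ge fun hle => (h hij).not_ge (hC hle)
  simpa using Fin.val_le_of_strictMono hNq (Fin.last k)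

/-- A chain of rational times along which the path strictly increases witnesses `k` renewals;
conversely one time in each interval `[T i, T (i + 1))` gives such a chain. -/
lemma lt_iff_exists_chain_time (hT : StrictMono T) (hT0 : 0 ≤ T 0) (hC : StrictMono C)
    (hN : ∀ t, 0 ≤ t → T (N t) ≤ t ∧ t < T (N t + 1)) (k : ℕ) (c : ℝ) :
    T k < c ↔ ∃ q : Fin (k + 1) → ℚ≥0,
      StrictMono (fun i => C (N (q i))) ∧ (q (Fin.last k) : ℝ) < c := by
  constructor
  · intro hc
    obtain ⟨q, hNq, hqc⟩ := exists_counting_chain hT hT0 hN hc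
    refine ⟨q, ?_, hqc _⟩
    simp only [hNq]
    exact hC.comp Fin.val_strictMono
  · rintro ⟨q, hq, hqc⟩
    have hk := le_counting_last_of_strictMono hC.monotone (q := fun i => (q i : ℝ)) hq
    calc T k ≤ T (N (q (Fin.last k))) := hT.monotone hk
      _ ≤ q (Fin.last k) := (hN _ (by positivity)).1
      _ < c := hqc

lemma lt_iff_exists_chain_level (hT : StrictMono T) (hT0 : 0 ≤ T 0) (hC : StrictMono C)
    (hN : ∀ t, 0 ≤ t → T (N t) ≤ t ∧ t < T (N t + 1)) (k : ℕ) (d : ℝ) :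
    C k < d ↔ ∃ q : Fin (k + 1) → ℚ≥0,
      StrictMono (fun i => C (N (q i))) ∧ C (N (q (Fin.last k))) < d := by
  constructor
  · intro hd
    obtain ⟨q, hNq, -⟩ := exists_counting_chain hT hT0 hN (hT (Nat.lt_succ_self k))
    refine ⟨q, ?_, ?_⟩
    · simp only [hNq]
      exact hC.comp Fin.val_strictMono
    · simpa [hNq] using hd
  · rintro ⟨q, hq, hqd⟩
    have hk := le_counting_last_of_strictMono hC.monotone (q := fun i => (q i : ℝ)) hq
    exact (hC.monotone hk).trans_lt hqd

end Path

section Measurability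

variable {Ω : Type*} {mΩ : MeasurableSpace Ω}

variable {T C : ℕ → Ω → ℝ} {N : ℝ → Ω → ℕ}

lemma measurable_counting (hT : ∀ ω, Monotone (T · ω))
    (hN : ∀ t ω, 0 ≤ t → T (N t ω) ω ≤ t ∧ t < T (N t ω + 1) ω)
    (hTm : ∀ n, Measurable (T n)) {t : ℝ} (ht : 0 ≤ t) : Measurable (N t) := by
  refine measurable_to_countable' fun k => ?_
  have : N t ⁻¹' {k} = {ω | T k ω ≤ t} ∩ {ω | t < T (k + 1) ω} := by
    ext ω
    refine ⟨fun h => ?_, fun h => counting_eq_of_mem_Ico (hT ω) (hN · ω) ht h⟩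
    rw [Set.mem_preimage, mem_singleton_iff] at h
    simpa [h] using hN t ω ht
  rw [this]
  exact (measurableSet_le (hTm k) measurable_const).inter
    (measurableSet_lt measurable_const (hTm (k + 1)))

lemma measurable_of_measurable_path (hT : ∀ ω, StrictMono (T · ω)) (hT0 : ∀ ω, 0 ≤ T 0 ω)
    (hC : ∀ ω, StrictMono (C · ω))
    (hN : ∀ t ω, 0 ≤ t → T (N t ω) ω ≤ t ∧ t < T (N t ω + 1) ω)
    (hS : ∀ q : ℚ≥0, Measurable fun ω => C (N q ω) ω) (k : ℕ) :
    Measurable (T k) ∧ Measurable (C k) := by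
  have hchain (q : Fin (k + 1) → ℚ≥0) :
      MeasurableSet {ω | StrictMono fun i => C (N (q i) ω) ω} :=
    measurableSet_setOf_strictMono fun i => hS (q i)
  constructor
  · refine measurable_of_Iio fun c => ?_
    have : T k ⁻¹' Iio c = ⋃ q : Fin (k + 1) → ℚ≥0,
        {ω | StrictMono fun i => C (N (q i) ω) ω} ∩ {_ω | (q (Fin.last k) : ℝ) < c} := by
      ext ω
      simp [lt_iff_exists_chain_time (hT ω) (hT0 ω) (hC ω) (hN · ω) k c]
    rw [this]
    exact .iUnion fun q => (hchain q).inter (.const _)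
  · refine measurable_of_Iio fun d => ?_
    have : C k ⁻¹' Iio d = ⋃ q : Fin (k + 1) → ℚ≥0,
        {ω | StrictMono fun i => C (N (q i) ω) ω} ∩
          {ω | C (N (q (Fin.last k)) ω) ω < d} := by
      ext ω
      simp [lt_iff_exists_chain_level (hT ω) (hT0 ω) (hC ω) (hN · ω) k d]
    rw [this]
    exact .iUnion fun q => (hchain q).inter (measurableSet_lt (hS _) measurable_const)

end Measurability

theorem iSup_comap_sum_range_counting_eq_comap {Ω : Type*} {W X : ℕ → Ω → ℝ}
    {N : ℝ → Ω → ℕ}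
    (hW : ∀ n ω, 0 < W n ω) (hX : ∀ n ω, 0 < X n ω)
    (hN : ∀ t ω, 0 ≤ t →
      ∑ k ∈ range (N t ω), W k ω ≤ t ∧ t < ∑ k ∈ range (N t ω + 1), W k ω) :
    ⨆ u ∈ Ici (0 : ℝ),
        MeasurableSpace.comap (fun ω => ∑ k ∈ range (N u ω), X k ω) inferInstance =
      MeasurableSpace.comap (fun ω => (fun n => W n ω, fun n => X n ω)) inferInstance := by
  set T : ℕ → Ω → ℝ := fun n ω => ∑ k ∈ range n, W k ω
  set C : ℕ → Ω → ℝ := fun n ω => ∑ k ∈ range n, X k ω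
  have hT (ω : Ω) : StrictMono (T · ω) := strictMono_sum_range (hW · ω)
  have hC (ω : Ω) : StrictMono (C · ω) := strictMono_sum_range (hX · ω)
  have hWT (n : ℕ) : W n = T (n + 1) - T n := funext fun ω => by simp [T, sum_range_succ]
  have hXC (n : ℕ) : X n = C (n + 1) - C n := funext fun ω => by simp [C, sum_range_succ]
  apply le_antisymm
  · refine iSup₂_le fun u hu => Measurable.comap_le ?_
    set Φ : Ω → (ℕ → ℝ) × (ℕ → ℝ) := fun ω => (fun n => W n ω, fun n => X n ω)
    have hΦ : Measurable[MeasurableSpace.comap Φ inferInstance] Φ := comap_measurable Φ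
    have hTm (n : ℕ) : Measurable[MeasurableSpace.comap Φ inferInstance] (T n) :=
      Finset.measurable_sum _ fun k _ => (measurable_pi_apply k).comp (measurable_fst.comp hΦ)
    have hCm (n : ℕ) : Measurable[MeasurableSpace.comap Φ inferInstance] (C n) :=
      Finset.measurable_sum _ fun k _ => (measurable_pi_apply k).comp (measurable_snd.comp hΦ)
    exact measurable_apply_of_measurable_nat hCm
      (measurable_counting (fun ω => (hT ω).monotone) hN hTm hu)
  · set mS : MeasurableSpace Ω := ⨆ u ∈ Ici (0 : ℝ),
      MeasurableSpace.comap (fun ω => ∑ k ∈ range (N u ω), X k ω) inferInstance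
    have hS (q : ℚ≥0) : Measurable[mS] fun ω => C (N q ω) ω :=
      Measurable.of_comap_le (le_biSup (fun u : ℝ => MeasurableSpace.comap
        (fun ω => ∑ k ∈ range (N u ω), X k ω) inferInstance) (mem_Ici.2 q.cast_nonneg))
    have hTC := measurable_of_measurable_path hT (fun ω => by simp [T]) hC hN hS
    have hWm (n : ℕ) : Measurable[mS] (W n) := hWT n ▸ (hTC (n + 1)).1.sub (hTC n).1
    have hXm (n : ℕ) : Measurable[mS] (X n) := hXC n ▸ (hTC (n + 1)).2.sub (hTC n).2
    exact ((measurable_pi_lambda _ hWm).prodMk (measurable_pi_lambda _ hXm)).comap_le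

end CompoundRenewal

section Laws

variable {Ω β : Type*} {m mΩ : MeasurableSpace Ω} [MeasurableSpace β] {P Q : Measure Ω}

lemma map_fun_eq_of_iIndepFun {ι : Type*} [IsProbabilityMeasure P] [IsProbabilityMeasure Q]
    {Y : ι → Ω → β} (hY : ∀ i, Measurable (Y i)) (hP : iIndepFun Y P) (hQ : iIndepFun Y Q)
    (h : ∀ i, P.map (Y i) = Q.map (Y i)) :
    P.map (fun ω i => Y i ω) = Q.map (fun ω i => Y i ω) := by
  rw [hP.map_fun_eq_infinitePi_map hY, hQ.map_fun_eq_infinitePi_map hY]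
  simp_rw [h]

lemma map_prodMk_eq_of_indep {ι κ γ : Type*} [MeasurableSpace γ] [IsProbabilityMeasure P]
    [IsProbabilityMeasure Q] {Y : ι → Ω → β} {Z : κ → Ω → γ}
    (hY : ∀ i, Measurable (Y i)) (hZ : ∀ j, Measurable (Z j))
    (hPY : iIndepFun Y P) (hPZ : iIndepFun Z P)
    (hP : Indep (⨆ i, MeasurableSpace.comap (Y i) inferInstance)
      (⨆ j, MeasurableSpace.comap (Z j) inferInstance) P)
    (hQY : iIndepFun Y Q) (hQZ : iIndepFun Z Q)
    (hQ : Indep (⨆ i, MeasurableSpace.comap (Y i) inferInstance)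
      (⨆ j, MeasurableSpace.comap (Z j) inferInstance) Q)
    (hYlaw : ∀ i, P.map (Y i) = Q.map (Y i)) (hZlaw : ∀ j, P.map (Z j) = Q.map (Z j)) :
    P.map (fun ω => (fun i => Y i ω, fun j => Z j ω)) =
      Q.map (fun ω => (fun i => Y i ω, fun j => Z j ω)) := by
  have hYm : Measurable fun ω i => Y i ω := measurable_pi_lambda _ hY
  have hZm : Measurable fun ω j => Z j ω := measurable_pi_lambda _ hZ
  have hindep {μ : Measure Ω} [IsProbabilityMeasure μ]
      (h : Indep (⨆ i, MeasurableSpace.comap (Y i) inferInstance)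
        (⨆ j, MeasurableSpace.comap (Z j) inferInstance) μ) :
      μ.map (fun ω => (fun i => Y i ω, fun j => Z j ω)) =
        (μ.map fun ω i => Y i ω).prod (μ.map fun ω j => Z j ω) := by
    rw [← indepFun_iff_map_prod_eq_prod_map_map hYm.aemeasurable hZm.aemeasurable,
      IndepFun_iff_Indep, MeasurableSpace.comap_process_pi, MeasurableSpace.comap_process_pi]
    exact h
  rw [hindep hP, hindep hQ, map_fun_eq_of_iIndepFun hY hPY hQY hYlaw,
    map_fun_eq_of_iIndepFun hZ hPZ hQZ hZlaw]

noncomputable def empiricalFrequency (Y : ℕ → Ω → β) (B : Set β) (n : ℕ) : Ω → ℝ :=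
  fun ω => (∑ i ∈ range n, B.indicator 1 (Y i ω)) / n

lemma measurable_empiricalFrequency {Y : ℕ → Ω → β} (hY : ∀ n, Measurable (Y n))
    {B : Set β} (hB : MeasurableSet B) (n : ℕ) : Measurable (empiricalFrequency Y B n) :=
  (Finset.measurable_sum _ fun i _ => (measurable_const.indicator hB).comp (hY i)).div_const _

lemma ae_tendsto_empiricalFrequency [IsFiniteMeasure P] {Y : ℕ → Ω → β}
    (hY : ∀ n, Measurable (Y n)) (hind : iIndepFun Y P) (hid : ∀ n, P.map (Y n) = P.map (Y 0))
    {B : Set β} (hB : MeasurableSet B) :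
    ∀ᵐ ω ∂P, Tendsto (empiricalFrequency Y B · ω) atTop (𝓝 ((P.map (Y 0)).real B)) := by
  have hf : Measurable (B.indicator (1 : β → ℝ)) := measurable_const.indicator hB
  have hident (i : ℕ) : IdentDistrib (fun ω => B.indicator (1 : β → ℝ) (Y i ω))
      (fun ω => B.indicator (1 : β → ℝ) (Y 0 ω)) P P :=
    (IdentDistrib.mk (hY i).aemeasurable (hY 0).aemeasurable (hid i)).comp hf
  have hint : Integrable (fun ω => B.indicator (1 : β → ℝ) (Y 0 ω)) P :=
    ((integrable_const (1 : ℝ)).indicator hB).comp_measurable (hY 0)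
  have hmean : P[fun ω => B.indicator (1 : β → ℝ) (Y 0 ω)] = (P.map (Y 0)).real B := by
    rw [← integral_map (hY 0).aemeasurable hf.aestronglyMeasurable, integral_indicator_one hB]
  simpa only [hmean, empiricalFrequency] using
    strong_law_ae_real (fun i ω => B.indicator (1 : β → ℝ) (Y i ω)) hint
    (fun i j hij => (hind.comp (fun _ => B.indicator 1) (fun _ => hf)).indepFun hij) hident

theorem map_eq_of_forall_measure_eq_zero_iff (hm : m ≤ mΩ)
    [IsProbabilityMeasure P] [IsProbabilityMeasure Q] {Y : ℕ → Ω → β}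
    (hY : ∀ n, Measurable[m] (Y n))
    (hPind : iIndepFun Y P) (hPid : ∀ n, P.map (Y n) = P.map (Y 0))
    (hQind : iIndepFun Y Q) (hQid : ∀ n, Q.map (Y n) = Q.map (Y 0))
    (hnull : ∀ A, MeasurableSet[m] A → (P A = 0 ↔ Q A = 0)) :
    P.map (Y 0) = Q.map (Y 0) := by
  have hYΩ (n : ℕ) : Measurable (Y n) := (hY n).mono hm le_rfl
  ext B hB
  have hconv (c : ℝ) :
      MeasurableSet[m] {ω | Tendsto (empiricalFrequency Y B · ω) atTop (𝓝 c)} :=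
    measurableSet_tendsto _ (measurable_empiricalFrequency hY hB)
  have hP := ae_tendsto_empiricalFrequency hYΩ hPind hPid hB
  have hQ := ae_tendsto_empiricalFrequency hYΩ hQind hQid hB
  have hPQ : ∀ᵐ ω ∂Q,
      Tendsto (empiricalFrequency Y B · ω) atTop (𝓝 ((P.map (Y 0)).real B)) := by
    rw [ae_iff] at hP ⊢
    exact (hnull _ (hconv _).compl).1 hP
  obtain ⟨ω, hωP, hωQ⟩ := (hPQ.and hQ).exists
  exact (measureReal_eq_measureReal_iff).1 (tendsto_nhds_unique hωP hωQ)

end Laws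

theorem stmt_6_general {Ω : Type*} [MeasurableSpace Ω]
    (P Q : Measure Ω) [IsProbabilityMeasure P] [IsProbabilityMeasure Q]
    (W X : ℕ → Ω → ℝ)
    (hWm : ∀ n, Measurable (W n)) (hXm : ∀ n, Measurable (X n))
    (hWpos : ∀ n ω, 0 < W n ω) (hXpos : ∀ n ω, 0 < X n ω)
    -- compound renewal process under P
    (hPWind : iIndepFun W P)
    (hPWid : ∀ n, P.map (W n) = P.map (W 0))
    (hPXind : iIndepFun X P)
    (hPXid : ∀ n, P.map (X n) = P.map (X 0))
    (hPindep : Indep (⨆ n, MeasurableSpace.comap (W n) inferInstance)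
      (⨆ n, MeasurableSpace.comap (X n) inferInstance) P)
    -- compound renewal process under Q
    (hQWind : iIndepFun W Q)
    (hQWid : ∀ n, Q.map (W n) = Q.map (W 0))
    (hQXind : iIndepFun X Q)
    (hQXid : ∀ n, Q.map (X n) = Q.map (X 0))
    (hQindep : Indep (⨆ n, MeasurableSpace.comap (W n) inferInstance)
      (⨆ n, MeasurableSpace.comap (X n) inferInstance) Q)
    -- renewal structure and aggregate claims process
    (T : ℕ → Ω → ℝ) (hT : ∀ n ω, T n ω = ∑ k ∈ Finset.range n, W k ω)
    (N : ℝ → Ω → ℕ)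
    (hN : ∀ t ω, 0 ≤ t → T (N t ω) ω ≤ t ∧ t < T (N t ω + 1) ω)
    (S : ℝ → Ω → ℝ) (hS : ∀ t ω, S t ω = ∑ k ∈ Finset.range (N t ω), X k ω)
    (F : ℝ → MeasurableSpace Ω)
    (hF : ∀ t, F t = ⨆ u ∈ Set.Icc (0 : ℝ) t, MeasurableSpace.comap (S u) inferInstance)
    :
    ((∀ A : Set Ω, MeasurableSet[⨆ t ∈ Set.Ici (0 : ℝ), F t] A → (P A = 0 ↔ Q A = 0)) ↔
      (P.map (X 0) = Q.map (X 0) ∧ P.map (W 0) = Q.map (W 0))) ∧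
    ((P.map (X 0) = Q.map (X 0) ∧ P.map (W 0) = Q.map (W 0)) ↔
      (∀ A : Set Ω, MeasurableSet[⨆ t ∈ Set.Ici (0 : ℝ), F t] A → P A = Q A)) := by
  obtain rfl : T = fun n ω => ∑ k ∈ range n, W k ω := funext fun n => funext (hT n)
  obtain rfl : S = fun t ω => ∑ k ∈ range (N t ω), X k ω := funext fun t => funext (hS t)
  set Φ : Ω → (ℕ → ℝ) × (ℕ → ℝ) := fun ω => (fun n => W n ω, fun n => X n ω)
  have hΦ : Measurable Φ :=
    (measurable_pi_lambda _ hWm).prodMk (measurable_pi_lambda _ hXm)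
  have hF_top : ⨆ t ∈ Ici (0 : ℝ), F t = MeasurableSpace.comap Φ inferInstance := by
    simp_rw [hF, biSup_Ici_biSup_Icc]
    exact CompoundRenewal.iSup_comap_sum_range_counting_eq_comap hWpos hXpos hN
  rw [hF_top]
  have hΦW (n : ℕ) : Measurable[MeasurableSpace.comap Φ inferInstance] (W n) :=
    (measurable_pi_apply n).comp (measurable_fst.comp (comap_measurable Φ))
  have hΦX (n : ℕ) : Measurable[MeasurableSpace.comap Φ inferInstance] (X n) :=
    (measurable_pi_apply n).comp (measurable_snd.comp (comap_measurable Φ))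
  have laws_of_null (h : ∀ A, MeasurableSet[MeasurableSpace.comap Φ inferInstance] A →
      (P A = 0 ↔ Q A = 0)) : P.map (X 0) = Q.map (X 0) ∧ P.map (W 0) = Q.map (W 0) :=
    ⟨map_eq_of_forall_measure_eq_zero_iff hΦ.comap_le hΦX hPXind hPXid hQXind hQXid h,
      map_eq_of_forall_measure_eq_zero_iff hΦ.comap_le hΦW hPWind hPWid hQWind hQWid h⟩
  have eq_of_laws (h : P.map (X 0) = Q.map (X 0) ∧ P.map (W 0) = Q.map (W 0)) :
      ∀ A, MeasurableSet[MeasurableSpace.comap Φ inferInstance] A → P A = Q A := by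
    rintro _ ⟨B, hB, rfl⟩
    have hmap : P.map Φ = Q.map Φ := map_prodMk_eq_of_indep hWm hXm hPWind hPXind hPindep
      hQWind hQXind hQindep (fun n => by rw [hPWid, hQWid, h.2])
      (fun n => by rw [hPXid, hQXid, h.1])
    rw [← Measure.map_apply hΦ hB, ← Measure.map_apply hΦ hB, hmap]
  exact ⟨⟨laws_of_null, fun h A hA => by rw [eq_of_laws h A hA]⟩,
    eq_of_laws, fun h => laws_of_null fun A hA => by rw [h A hA]⟩

/-- for a process `S` which is a compound renewal process under
both `P` and `Q`, the following are equivalent: (i) `P ∼ Q` on `F_∞`,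
(ii) `P_{X_1} = Q_{X_1}` and `P_{W_1} = Q_{W_1}`, (iii) `P = Q` on `F_∞`. -/
theorem stmt_6 {Ω : Type*} [MeasurableSpace Ω]
    (P Q : Measure Ω) [IsProbabilityMeasure P] [IsProbabilityMeasure Q]
    (W X : ℕ → Ω → ℝ)
    (hWm : ∀ n, Measurable (W n)) (hXm : ∀ n, Measurable (X n))
    (hWpos : ∀ n ω, 0 < W n ω) (hXpos : ∀ n ω, 0 < X n ω)
    -- compound renewal process under P
    (hPWind : iIndepFun W P)
    (hPWid : ∀ n, P.map (W n) = P.map (W 0))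
    (hPXind : iIndepFun X P)
    (hPXid : ∀ n, P.map (X n) = P.map (X 0))
    (hPindep : Indep (⨆ n, MeasurableSpace.comap (W n) inferInstance)
      (⨆ n, MeasurableSpace.comap (X n) inferInstance) P)
    -- compound renewal process under Q
    (hQWind : iIndepFun W Q)
    (hQWid : ∀ n, Q.map (W n) = Q.map (W 0))
    (hQXind : iIndepFun X Q)
    (hQXid : ∀ n, Q.map (X n) = Q.map (X 0))
    (hQindep : Indep (⨆ n, MeasurableSpace.comap (W n) inferInstance)
      (⨆ n, MeasurableSpace.comap (X n) inferInstance) Q)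
    -- renewal structure and aggregate claims process
    (T : ℕ → Ω → ℝ) (hT : ∀ n ω, T n ω = ∑ k ∈ Finset.range n, W k ω)
    (hTunb : ∀ ω M, ∃ n, M < T n ω)
    (N : ℝ → Ω → ℕ)
    (hN : ∀ t ω, 0 ≤ t → T (N t ω) ω ≤ t ∧ t < T (N t ω + 1) ω)
    (S : ℝ → Ω → ℝ) (hS : ∀ t ω, S t ω = ∑ k ∈ Finset.range (N t ω), X k ω)
    (F : ℝ → MeasurableSpace Ω)
    (hF : ∀ t, F t = ⨆ u ∈ Set.Icc (0 : ℝ) t, MeasurableSpace.comap (S u) inferInstance)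
    :
    ((∀ A : Set Ω, MeasurableSet[⨆ t ∈ Set.Ici (0 : ℝ), F t] A → (P A = 0 ↔ Q A = 0)) ↔
      (P.map (X 0) = Q.map (X 0) ∧ P.map (W 0) = Q.map (W 0))) ∧
    ((P.map (X 0) = Q.map (X 0) ∧ P.map (W 0) = Q.map (W 0)) ↔
      (∀ A : Set Ω, MeasurableSet[⨆ t ∈ Set.Ici (0 : ℝ), F t] A → P A = Q A)) :=
  stmt_6_general P Q W X hWm hXm hWpos hXpos hPWind hPWid hPXind hPXid hPindep hQWind hQWid hQXind
    hQXid hQindep T hT N hN S hS F hF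
end

section
/- Let S be a compound renewal process under both P and Q on a common space with terminal σ-algebra F_∞. If P and Q do not coincide on F_∞, then P and Q are mutually singular on F_∞. In particular, two distinct compound-renewal laws for S are either identical or singular on F_∞ (a dichotomy). -/
/-!
Because the claims are positive, the path of `S` determines the arrival times and the claim
sizes, so `F_∞` is exactly the σ-algebra generated by the sequences `W` and `X`. Under each
measure the law of `(W, X)` is `μ^ℕ ⊗ ν^ℕ`, with `μ`, `ν` the laws of `W 0` and `X 0`. If both
marginals agree under `P` and `Q`, then `P = Q` on `F_∞`. Otherwise, say `μ_P B ≠ μ_Q B`; by the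
strong law of large numbers the empirical frequency of `B` converges to `μ_P B` `P`-a.s. and to
`μ_Q B` `Q`-a.s., which separates `P` from `Q`.
-/

open MeasureTheory ProbabilityTheory Set

lemma strictMono_sum_range_of_pos_s7 {M : Type*} [AddCommMonoid M] [PartialOrder M]
    [IsOrderedCancelAddMonoid M] {a : ℕ → M} (ha : ∀ k, 0 < a k) :
    StrictMono fun n ↦ ∑ k ∈ Finset.range n, a k :=
  strictMono_nat_of_lt_succ fun n ↦ by
    simpa only [Finset.sum_range_succ] using lt_add_of_pos_right _ (ha n)

lemma iSup_Ici_iSup_Icc {α β : Type*} [Preorder α] [CompleteLattice β] (a : α) (f : α → β) :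
    ⨆ t ∈ Ici a, ⨆ u ∈ Icc a t, f u = ⨆ u ∈ Ici a, f u :=
  le_antisymm (iSup₂_le fun _ _ ↦ iSup₂_le fun u hu ↦ le_iSup₂_of_le u hu.1 le_rfl)
    (iSup₂_le fun u hu ↦ le_iSup₂_of_le u hu (le_iSup₂_of_le u ⟨hu, le_rfl⟩ le_rfl))

section Counting

variable {α : Type*} [LinearOrder α] {t : ℕ → α} {u : α} {k : ℕ}

lemma StrictMono.le_iff_apply_le_of_mem_Ico (ht : StrictMono t) (hk : u ∈ Ico (t k) (t (k + 1)))
    (n : ℕ) : n ≤ k ↔ t n ≤ u :=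
  ⟨fun h ↦ (ht.monotone h).trans hk.1,
    fun h ↦ Nat.lt_succ_iff.1 (ht.lt_iff_lt.1 (h.trans_lt hk.2))⟩

lemma StrictMono.eq_of_mem_Ico (ht : StrictMono t) (hk : u ∈ Ico (t k) (t (k + 1))) {n : ℕ}
    (hn : u ∈ Ico (t n) (t (n + 1))) : n = k :=
  le_antisymm ((ht.le_iff_apply_le_of_mem_Ico hk n).2 hn.1)
    ((ht.le_iff_apply_le_of_mem_Ico hn k).2 hk.1)

end Counting

section Renewal

variable {Ω : Type*} {T A : ℕ → Ω → ℝ} {N : ℝ → Ω → ℕ} {S : ℝ → Ω → ℝ}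

lemma claimSum_le_aggregate_iff (hTmono : ∀ ω, StrictMono (T · ω))
    (hAmono : ∀ ω, StrictMono (A · ω))
    (hN : ∀ t ω, 0 ≤ t → t ∈ Ico (T (N t ω) ω) (T (N t ω + 1) ω))
    (hS : ∀ t ω, S t ω = A (N t ω) ω) {u : ℝ} (hu : 0 ≤ u) (n : ℕ) (ω : Ω) :
    A n ω ≤ S u ω ↔ T n ω ≤ u := by
  rw [hS, (hAmono ω).le_iff_le, (hTmono ω).le_iff_apply_le_of_mem_Ico (hN u ω hu)]

section Measurability

variable [MeasurableSpace Ω]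

lemma measurable_renewal_count (hTm : ∀ n, Measurable (T n))
    (hTmono : ∀ ω, StrictMono (T · ω)) (hN : ∀ t ω, 0 ≤ t → t ∈ Ico (T (N t ω) ω) (T (N t ω + 1) ω))
    {u : ℝ} (hu : 0 ≤ u) : Measurable (N u) := by
  refine measurable_to_countable' fun n ↦ ?_
  have : N u ⁻¹' {n} = {ω | T n ω ≤ u} ∩ {ω | u < T (n + 1) ω} := by
    ext ω
    exact ⟨by rintro rfl; exact hN u ω hu, fun hn ↦ (hTmono ω).eq_of_mem_Ico hn (hN u ω hu)⟩
  rw [this]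
  exact (measurableSet_le (hTm n) measurable_const).inter
    (measurableSet_lt measurable_const (hTm (n + 1)))

lemma measurable_aggregate (hTm : ∀ n, Measurable (T n))
    (hAm : ∀ n, Measurable (A n))
    (hTmono : ∀ ω, StrictMono (T · ω)) (hN : ∀ t ω, 0 ≤ t → t ∈ Ico (T (N t ω) ω) (T (N t ω + 1) ω))
    (hS : ∀ t ω, S t ω = A (N t ω) ω) {u : ℝ} (hu : 0 ≤ u) : Measurable (S u) := by
  have hA : Measurable fun p : Ω × ℕ ↦ A p.2 p.1 := measurable_from_prod_countable_left hAm
  rw [funext (hS u)]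
  exact hA.comp (measurable_id.prodMk (measurable_renewal_count hTm hTmono hN hu))

/- Positive claims make `S` jump exactly at the arrival times: `A (n + 1)` is the least value of
`S` above `A n`, and `T n` is the first time at which `S` reaches `A n`. -/
lemma measurable_arrival_of_measurable_claimSum (hTmono : ∀ ω, StrictMono (T · ω))
    (hT0 : ∀ ω, T 0 ω = 0) (hAmono : ∀ ω, StrictMono (A · ω))
    (hN : ∀ t ω, 0 ≤ t → t ∈ Ico (T (N t ω) ω) (T (N t ω + 1) ω))
    (hS : ∀ t ω, S t ω = A (N t ω) ω) (hSm : ∀ u, 0 ≤ u → Measurable (S u)) {n : ℕ}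
    (hAm : Measurable (A n)) : Measurable (T n) := by
  refine measurable_of_Iio fun c ↦ ?_
  have : T n ⁻¹' Iio c = ⋃ q : ℚ, ⋃ (_ : 0 ≤ (q : ℝ) ∧ (q : ℝ) < c), {ω | A n ω ≤ S q ω} := by
    ext ω
    simp only [mem_preimage, mem_Iio, mem_iUnion, mem_ofPred_eq, exists_prop]
    constructor
    · intro h
      obtain ⟨q, hnq, hqc⟩ := exists_rat_btwn h
      have hq : 0 ≤ (q : ℝ) := ((hT0 ω).symm.trans_le ((hTmono ω).monotone n.zero_le)).trans hnq.le
      exact ⟨q, ⟨hq, hqc⟩, (claimSum_le_aggregate_iff hTmono hAmono hN hS hq n ω).2 hnq.le⟩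
    · rintro ⟨q, ⟨hq, hqc⟩, h⟩
      exact ((claimSum_le_aggregate_iff hTmono hAmono hN hS hq n ω).1 h).trans_lt hqc
  rw [this]
  exact .iUnion fun q ↦ .iUnion fun hq ↦ measurableSet_le hAm (hSm q hq.1)

lemma measurable_claimSum_succ (hTmono : ∀ ω, StrictMono (T · ω))
    (hT0 : ∀ ω, T 0 ω = 0) (hAmono : ∀ ω, StrictMono (A · ω))
    (hN : ∀ t ω, 0 ≤ t → t ∈ Ico (T (N t ω) ω) (T (N t ω + 1) ω))
    (hS : ∀ t ω, S t ω = A (N t ω) ω) (hSm : ∀ u, 0 ≤ u → Measurable (S u)) {n : ℕ}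
    (hAm : Measurable (A n)) : Measurable (A (n + 1)) := by
  refine measurable_of_Iio fun c ↦ ?_
  have : A (n + 1) ⁻¹' Iio c =
      ⋃ q : ℚ, ⋃ (_ : 0 ≤ (q : ℝ)), {ω | A n ω < S q ω} ∩ {ω | S q ω < c} := by
    ext ω
    simp only [mem_preimage, mem_Iio, mem_iUnion, mem_inter_iff, mem_ofPred_eq, exists_prop]
    constructor
    · intro h
      obtain ⟨q, hq₁, hq₂⟩ := exists_rat_btwn ((hTmono ω) (n + 1).lt_succ_self)
      have hq : 0 ≤ (q : ℝ) :=
        ((hT0 ω).symm.trans_le ((hTmono ω).monotone (n + 1).zero_le)).trans hq₁.le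
      have hNq : N q ω = n + 1 := (hTmono ω).eq_of_mem_Ico ⟨hq₁.le, hq₂⟩ (hN q ω hq)
      refine ⟨q, hq, ?_⟩
      rw [hS, hNq]
      exact ⟨(hAmono ω) n.lt_succ_self, h⟩
    · rintro ⟨q, -, hnq, hqc⟩
      rw [hS, (hAmono ω).lt_iff_lt] at hnq
      exact ((hAmono ω).monotone hnq).trans_lt (hS q ω ▸ hqc)
  rw [this]
  exact .iUnion fun q ↦ .iUnion fun hq ↦
    (measurableSet_lt hAm (hSm q hq)).inter (measurableSet_lt (hSm q hq) measurable_const)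

theorem measurable_interarrival_claim_iff_measurable_aggregate {W X : ℕ → Ω → ℝ}
    (hWpos : ∀ n ω, 0 < W n ω) (hXpos : ∀ n ω, 0 < X n ω)
    (hT : ∀ n ω, T n ω = ∑ k ∈ Finset.range n, W k ω)
    (hN : ∀ t ω, 0 ≤ t → T (N t ω) ω ≤ t ∧ t < T (N t ω + 1) ω)
    (hS : ∀ t ω, S t ω = ∑ k ∈ Finset.range (N t ω), X k ω) :
    ((∀ n, Measurable (W n)) ∧ ∀ n, Measurable (X n)) ↔ ∀ u, 0 ≤ u → Measurable (S u) := by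
  set A : ℕ → Ω → ℝ := fun n ω ↦ ∑ k ∈ Finset.range n, X k ω
  have hT' : ∀ n, T n = fun ω ↦ ∑ k ∈ Finset.range n, W k ω := fun n ↦ funext (hT n)
  have hTmono : ∀ ω, StrictMono (T · ω) := fun ω ↦ by
    simpa only [hT] using strictMono_sum_range_of_pos_s7 (hWpos · ω)
  have hAmono : ∀ ω, StrictMono (A · ω) := fun ω ↦ strictMono_sum_range_of_pos_s7 (hXpos · ω)
  have hT0 : ∀ ω, T 0 ω = 0 := by simp [hT]
  constructor
  · rintro ⟨hWm, hXm⟩ u hu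
    exact measurable_aggregate (A := A) (fun n ↦ hT' n ▸ by fun_prop) (fun n ↦ by fun_prop)
      hTmono hN hS hu
  · intro hSm
    have hAm : ∀ n, Measurable (A n) := fun n ↦ by
      induction n with
      | zero => simp only [A, Finset.range_zero, Finset.sum_empty]; exact measurable_const
      | succ n ih => exact measurable_claimSum_succ hTmono hT0 hAmono hN hS hSm ih
    have hTm : ∀ n, Measurable (T n) := fun n ↦
      measurable_arrival_of_measurable_claimSum hTmono hT0 hAmono hN hS hSm (hAm n)
    refine ⟨fun n ↦ ?_, fun n ↦ ?_⟩
    · convert (hTm (n + 1)).sub (hTm n) using 1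
      ext ω
      simp [hT, Finset.sum_range_succ]
    · convert (hAm (n + 1)).sub (hAm n) using 1
      ext ω
      simp [A, Finset.sum_range_succ]

end Measurability

theorem iSup_comap_aggregate_eq_comap_interarrival_claim {W X : ℕ → Ω → ℝ}
    (hWpos : ∀ n ω, 0 < W n ω) (hXpos : ∀ n ω, 0 < X n ω)
    (hT : ∀ n ω, T n ω = ∑ k ∈ Finset.range n, W k ω)
    (hN : ∀ t ω, 0 ≤ t → T (N t ω) ω ≤ t ∧ t < T (N t ω + 1) ω)
    (hS : ∀ t ω, S t ω = ∑ k ∈ Finset.range (N t ω), X k ω) :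
    ⨆ u ∈ Ici (0 : ℝ), MeasurableSpace.comap (S u) inferInstance =
      MeasurableSpace.comap (fun ω ↦ (fun n ↦ W n ω, fun n ↦ X n ω)) inferInstance := by
  apply le_antisymm
  · let _ : MeasurableSpace Ω :=
      MeasurableSpace.comap (fun ω ↦ (fun n ↦ W n ω, fun n ↦ X n ω)) inferInstance
    have hZ := comap_measurable (m := inferInstance) fun ω ↦ (fun n ↦ W n ω, fun n ↦ X n ω)
    have hSm := (measurable_interarrival_claim_iff_measurable_aggregate hWpos hXpos hT hN hS).1
      ⟨fun n ↦ (measurable_pi_apply n).comp (measurable_fst.comp hZ),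
        fun n ↦ (measurable_pi_apply n).comp (measurable_snd.comp hZ)⟩
    exact iSup₂_le fun u hu ↦ (hSm u hu).comap_le
  · let _ : MeasurableSpace Ω := ⨆ u ∈ Ici (0 : ℝ), MeasurableSpace.comap (S u) inferInstance
    obtain ⟨hW, hX⟩ :=
      (measurable_interarrival_claim_iff_measurable_aggregate hWpos hXpos hT hN hS).2
        fun u hu ↦ measurable_iff_comap_le.2 (le_iSup₂_of_le u hu le_rfl)
    exact ((measurable_pi_lambda _ hW).prodMk (measurable_pi_lambda _ hX)).comap_le

end Renewal

namespace MeasureTheory.Measure.MutuallySingular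

variable {α β : Type*} [MeasurableSpace α] [MeasurableSpace β]

lemma prod_of_left {μ₁ ν₁ : Measure α} (h : μ₁ ⟂ₘ ν₁) (μ₂ ν₂ : Measure β) [SFinite μ₂]
    [SFinite ν₂] : μ₁.prod μ₂ ⟂ₘ ν₁.prod ν₂ := by
  refine ⟨h.nullSet ×ˢ univ, h.measurableSet_nullSet.prod .univ, ?_, ?_⟩
  · rw [prod_prod, h.measure_nullSet, zero_mul]
  · rw [compl_prod_eq_union]
    simp

lemma prod_of_right (μ₁ ν₁ : Measure α) {μ₂ ν₂ : Measure β} (h : μ₂ ⟂ₘ ν₂) [SFinite μ₂]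
    [SFinite ν₂] : μ₁.prod μ₂ ⟂ₘ ν₁.prod ν₂ := by
  refine ⟨univ ×ˢ h.nullSet, MeasurableSet.univ.prod h.measurableSet_nullSet, ?_, ?_⟩
  · rw [prod_prod, h.measure_nullSet, mul_zero]
  · rw [compl_prod_eq_union]
    simp

end MeasureTheory.Measure.MutuallySingular

section InfinitePi

open Filter Topology

variable {α : Type*} [MeasurableSpace α]

lemma ae_tendsto_frequency_infinitePi (μ : Measure α) [IsProbabilityMeasure μ] {B : Set α}
    (hB : MeasurableSet B) :
    ∀ᵐ x ∂(Measure.infinitePi fun _ : ℕ ↦ μ),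
      Tendsto (fun n : ℕ ↦ (∑ i ∈ Finset.range n, B.indicator (1 : α → ℝ) (x i)) / n) atTop
        (𝓝 (μ.real B)) := by
  have hφ : Measurable (B.indicator (1 : α → ℝ)) := measurable_one.indicator hB
  have hident : ∀ i, IdentDistrib (fun x : ℕ → α ↦ x i) (fun x ↦ x 0)
      (Measure.infinitePi fun _ ↦ μ) (Measure.infinitePi fun _ ↦ μ) := fun i ↦
    ⟨(measurable_pi_apply i).aemeasurable, (measurable_pi_apply 0).aemeasurable,
      by simp only [Measure.infinitePi_map_eval]⟩
  have hindep := iIndepFun_infinitePi (P := fun _ : ℕ ↦ μ) (X := fun _ ↦ id) (fun _ ↦ measurable_id)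
  have hmean : ∫ x, B.indicator 1 (x 0) ∂(Measure.infinitePi fun _ : ℕ ↦ μ) = μ.real B := by
    rw [← integral_map (measurable_pi_apply 0).aemeasurable hφ.aestronglyMeasurable,
      Measure.infinitePi_map_eval, integral_indicator_one hB]
  have hint : Integrable (fun x : ℕ → α ↦ B.indicator (1 : α → ℝ) (x 0))
      (Measure.infinitePi fun _ ↦ μ) :=
    (integrable_const (1 : ℝ)).mono' (hφ.comp (measurable_pi_apply 0)).aestronglyMeasurable
      (.of_forall fun x ↦ by by_cases hx : x 0 ∈ B <;> simp [hx])
  simpa only [hmean] using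
    strong_law_ae_real (fun i (x : ℕ → α) ↦ B.indicator (1 : α → ℝ) (x i)) hint
      (fun i j hij ↦ (hindep.indepFun hij).comp hφ hφ) (fun i ↦ (hident i).comp hφ)

lemma MeasureTheory.Measure.mutuallySingular_infinitePi_of_ne {μ ν : Measure α}
    [IsProbabilityMeasure μ] [IsProbabilityMeasure ν] (h : μ ≠ ν) :
    Measure.infinitePi (fun _ : ℕ ↦ μ) ⟂ₘ Measure.infinitePi (fun _ : ℕ ↦ ν) := by
  obtain ⟨B, hB, hμν⟩ : ∃ B, MeasurableSet B ∧ μ.real B ≠ ν.real B := by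
    by_contra! h'
    refine h (Measure.ext fun B hB ↦ ?_)
    simpa [measureReal_def, ENNReal.toReal_eq_toReal_iff'] using h' B hB
  have hφ : Measurable (B.indicator (1 : α → ℝ)) := measurable_one.indicator hB
  refine ⟨{x | Tendsto (fun n : ℕ ↦ (∑ i ∈ Finset.range n, B.indicator (1 : α → ℝ) (x i)) / n)
    atTop (𝓝 (μ.real B))}ᶜ, (measurableSet_tendsto _ fun n ↦ by fun_prop).compl, ?_, ?_⟩
  · exact ae_tendsto_frequency_infinitePi μ hB
  · rw [compl_compl]
    exact measure_mono_null (fun x hx hν ↦ hμν (tendsto_nhds_unique hx hν))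
      (ae_tendsto_frequency_infinitePi ν hB)

end InfinitePi

lemma MeasurableSpace.comap_pi_eq_iSup_comap {Ω ι : Type*} {β : ι → Type*}
    [m : ∀ i, MeasurableSpace (β i)] (f : ∀ i, Ω → β i) :
    MeasurableSpace.pi.comap (fun ω i ↦ f i ω) = ⨆ i, (m i).comap (f i) := by
  simp only [MeasurableSpace.pi, MeasurableSpace.comap_iSup, MeasurableSpace.comap_comp]
  rfl

section Law

variable {Ω : Type*} [MeasurableSpace Ω]

lemma ProbabilityTheory.iIndepFun.map_fun_eq_infinitePi_of_map_eq {α : Type*} [MeasurableSpace α]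
    {P : Measure Ω} {V : ℕ → Ω → α} (hV : ∀ n, Measurable (V n)) (hind : iIndepFun V P)
    (hid : ∀ n, P.map (V n) = P.map (V 0)) :
    P.map (fun ω n ↦ V n ω) = Measure.infinitePi fun _ ↦ P.map (V 0) := by
  rw [hind.map_fun_eq_infinitePi_map hV]
  simp only [hid]

lemma map_prod_eq_prod_infinitePi {α β : Type*} [MeasurableSpace α] [MeasurableSpace β]
    (P : Measure Ω) [IsProbabilityMeasure P] {U : ℕ → Ω → α} {V : ℕ → Ω → β}
    (hU : ∀ n, Measurable (U n)) (hV : ∀ n, Measurable (V n))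
    (hUind : iIndepFun U P) (hUid : ∀ n, P.map (U n) = P.map (U 0))
    (hVind : iIndepFun V P) (hVid : ∀ n, P.map (V n) = P.map (V 0))
    (hUV : Indep (⨆ n, MeasurableSpace.comap (U n) inferInstance)
      (⨆ n, MeasurableSpace.comap (V n) inferInstance) P) :
    P.map (fun ω ↦ (fun n ↦ U n ω, fun n ↦ V n ω)) =
      (Measure.infinitePi fun _ ↦ P.map (U 0)).prod (Measure.infinitePi fun _ ↦ P.map (V 0)) := by
  have hUV' : IndepFun (fun ω n ↦ U n ω) (fun ω n ↦ V n ω) P := by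
    rwa [IndepFun_iff_Indep, MeasurableSpace.comap_pi_eq_iSup_comap,
      MeasurableSpace.comap_pi_eq_iSup_comap]
  rw [(indepFun_iff_map_prod_eq_prod_map_map (measurable_pi_lambda _ hU).aemeasurable
      (measurable_pi_lambda _ hV).aemeasurable).1 hUV',
    hUind.map_fun_eq_infinitePi_of_map_eq hU hUid, hVind.map_fun_eq_infinitePi_of_map_eq hV hVid]

variable {β : Type*} [MeasurableSpace β] {P Q : Measure Ω} {Z : Ω → β}

lemma eq_on_comap_of_map_eq (hZ : Measurable Z) (h : P.map Z = Q.map Z) {A : Set Ω}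
    (hA : MeasurableSet[MeasurableSpace.comap Z inferInstance] A) : P A = Q A := by
  obtain ⟨B, hB, rfl⟩ := hA
  rw [← Measure.map_apply hZ hB, h, Measure.map_apply hZ hB]

lemma exists_comap_measurableSet_of_map_mutuallySingular [IsProbabilityMeasure P]
    (hZ : Measurable Z) (h : P.map Z ⟂ₘ Q.map Z) :
    ∃ E, MeasurableSet[MeasurableSpace.comap Z inferInstance] E ∧ P E = 1 ∧ Q E = 0 := by
  refine ⟨Z ⁻¹' h.nullSetᶜ, ⟨_, h.measurableSet_nullSet.compl, rfl⟩, ?_, ?_⟩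
  · rw [preimage_compl, prob_compl_eq_one_iff (hZ h.measurableSet_nullSet),
      ← Measure.map_apply hZ h.measurableSet_nullSet, h.measure_nullSet]
  · rw [← Measure.map_apply hZ h.measurableSet_nullSet.compl, h.measure_compl_nullSet]

end Law

theorem stmt_7_general {Ω : Type*} [MeasurableSpace Ω]
    (P Q : Measure Ω) [IsProbabilityMeasure P] [IsProbabilityMeasure Q]
    (W X : ℕ → Ω → ℝ)
    (hWm : ∀ n, Measurable (W n)) (hXm : ∀ n, Measurable (X n))
    (hWpos : ∀ n ω, 0 < W n ω) (hXpos : ∀ n ω, 0 < X n ω)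
    -- compound renewal process under P
    (hPWind : iIndepFun W P)
    (hPWid : ∀ n, P.map (W n) = P.map (W 0))
    (hPXind : iIndepFun X P)
    (hPXid : ∀ n, P.map (X n) = P.map (X 0))
    (hPindep : Indep (⨆ n, MeasurableSpace.comap (W n) inferInstance)
      (⨆ n, MeasurableSpace.comap (X n) inferInstance) P)
    -- compound renewal process under Q
    (hQWind : iIndepFun W Q)
    (hQWid : ∀ n, Q.map (W n) = Q.map (W 0))
    (hQXind : iIndepFun X Q)
    (hQXid : ∀ n, Q.map (X n) = Q.map (X 0))
    (hQindep : Indep (⨆ n, MeasurableSpace.comap (W n) inferInstance)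
      (⨆ n, MeasurableSpace.comap (X n) inferInstance) Q)
    -- renewal structure and aggregate claims process
    (T : ℕ → Ω → ℝ) (hT : ∀ n ω, T n ω = ∑ k ∈ Finset.range n, W k ω)
    (N : ℝ → Ω → ℕ)
    (hN : ∀ t ω, 0 ≤ t → T (N t ω) ω ≤ t ∧ t < T (N t ω + 1) ω)
    (S : ℝ → Ω → ℝ) (hS : ∀ t ω, S t ω = ∑ k ∈ Finset.range (N t ω), X k ω)
    (F : ℝ → MeasurableSpace Ω)
    (hF : ∀ t, F t = ⨆ u ∈ Set.Icc (0 : ℝ) t, MeasurableSpace.comap (S u) inferInstance)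
    (hne : ¬ ∀ A : Set Ω, MeasurableSet[⨆ t ∈ Set.Ici (0 : ℝ), F t] A → P A = Q A) :
    ∃ E : Set Ω, MeasurableSet[⨆ t ∈ Set.Ici (0 : ℝ), F t] E ∧ P E = 1 ∧ Q E = 0 := by
  let Z : Ω → (ℕ → ℝ) × (ℕ → ℝ) := fun ω ↦ (fun n ↦ W n ω, fun n ↦ X n ω)
  have hZ : Measurable Z := (measurable_pi_lambda _ hWm).prodMk (measurable_pi_lambda _ hXm)
  have hF_eq : ⨆ t ∈ Ici (0 : ℝ), F t = MeasurableSpace.comap Z inferInstance := by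
    simp_rw [hF, iSup_Ici_iSup_Icc]
    exact iSup_comap_aggregate_eq_comap_interarrival_claim hWpos hXpos hT hN hS
  have hPZ := map_prod_eq_prod_infinitePi P hWm hXm hPWind hPWid hPXind hPXid hPindep
  have hQZ := map_prod_eq_prod_infinitePi Q hWm hXm hQWind hQWid hQXind hQXid hQindep
  by_cases hWX : P.map (W 0) = Q.map (W 0) ∧ P.map (X 0) = Q.map (X 0)
  · refine absurd (fun A hA ↦ eq_on_comap_of_map_eq hZ ?_ (hF_eq ▸ hA)) hne
    rw [hPZ, hQZ, hWX.1, hWX.2]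
  have := Measure.isProbabilityMeasure_map (μ := P) (hWm 0).aemeasurable
  have := Measure.isProbabilityMeasure_map (μ := Q) (hWm 0).aemeasurable
  have := Measure.isProbabilityMeasure_map (μ := P) (hXm 0).aemeasurable
  have := Measure.isProbabilityMeasure_map (μ := Q) (hXm 0).aemeasurable
  have hsing : P.map Z ⟂ₘ Q.map Z := by
    rw [hPZ, hQZ]
    rcases not_and_or.1 hWX with hW | hX
    · exact (Measure.mutuallySingular_infinitePi_of_ne hW).prod_of_left _ _
    · exact .prod_of_right _ _ (Measure.mutuallySingular_infinitePi_of_ne hX)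
  obtain ⟨E, hE, hPE, hQE⟩ := exists_comap_measurableSet_of_map_mutuallySingular hZ hsing
  exact ⟨E, hF_eq ▸ hE, hPE, hQE⟩

/-- dichotomy: two compound-renewal laws for `S` either coincide
on `F_∞` or are mutually singular on `F_∞`. -/
theorem stmt_7 {Ω : Type*} [MeasurableSpace Ω]
    (P Q : Measure Ω) [IsProbabilityMeasure P] [IsProbabilityMeasure Q]
    (W X : ℕ → Ω → ℝ)
    (hWm : ∀ n, Measurable (W n)) (hXm : ∀ n, Measurable (X n))
    (hWpos : ∀ n ω, 0 < W n ω) (hXpos : ∀ n ω, 0 < X n ω)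
    -- compound renewal process under P
    (hPWind : iIndepFun W P)
    (hPWid : ∀ n, P.map (W n) = P.map (W 0))
    (hPXind : iIndepFun X P)
    (hPXid : ∀ n, P.map (X n) = P.map (X 0))
    (hPindep : Indep (⨆ n, MeasurableSpace.comap (W n) inferInstance)
      (⨆ n, MeasurableSpace.comap (X n) inferInstance) P)
    -- compound renewal process under Q
    (hQWind : iIndepFun W Q)
    (hQWid : ∀ n, Q.map (W n) = Q.map (W 0))
    (hQXind : iIndepFun X Q)
    (hQXid : ∀ n, Q.map (X n) = Q.map (X 0))
    (hQindep : Indep (⨆ n, MeasurableSpace.comap (W n) inferInstance)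
      (⨆ n, MeasurableSpace.comap (X n) inferInstance) Q)
    -- renewal structure and aggregate claims process
    (T : ℕ → Ω → ℝ) (hT : ∀ n ω, T n ω = ∑ k ∈ Finset.range n, W k ω)
    (hTunb : ∀ ω M, ∃ n, M < T n ω)
    (N : ℝ → Ω → ℕ)
    (hN : ∀ t ω, 0 ≤ t → T (N t ω) ω ≤ t ∧ t < T (N t ω + 1) ω)
    (S : ℝ → Ω → ℝ) (hS : ∀ t ω, S t ω = ∑ k ∈ Finset.range (N t ω), X k ω)
    (F : ℝ → MeasurableSpace Ω)
    (hF : ∀ t, F t = ⨆ u ∈ Set.Icc (0 : ℝ) t, MeasurableSpace.comap (S u) inferInstance)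
    (hne : ¬ ∀ A : Set Ω, MeasurableSet[⨆ t ∈ Set.Ici (0 : ℝ), F t] A → P A = Q A) :
    ∃ E : Set Ω, MeasurableSet[⨆ t ∈ Set.Ici (0 : ℝ), F t] E ∧ P E = 1 ∧ Q E = 0 :=
  stmt_7_general P Q W X hWm hXm hWpos hXpos hPWind hPWid hPXind hPXid hPindep hQWind hQWid hQXind
    hQXid hQindep T hT N hN S hS F hF hne
end

section
/- For a renewal process N with i.i.d. interarrival times, N is a Poisson process with parameter θ > 0 if and only if E[N_t] = tθ for every t ≥ 0. -/
open MeasureTheory ProbabilityTheory Set Filter Topology ENNReal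

/-!
Let `μ` be the law of the interarrival times and `U t = ∑_{n ≥ 1} μ^{*n} (-∞, t]` its renewal
function, so that `E[N_t] = U t`. `U` solves the renewal equation `U = F + U * μ` (`F` the cdf of
`μ`), and it is its only finite monotone solution vanishing on `(-∞, 0)`: iterating the equation
for a solution `X` leaves a remainder at most `X t · μ^{*n} (-∞, t] = X t · P(T_n ≤ t) → 0`.
Hence both sides of the equivalence say that `t ↦ tθ` solves the renewal equation. For this linear
candidate a layer-cake computation turns the equation into the Volterra equation
`F t + θ ∫₀ᵗ F = tθ`, which the exponential cdf `1 - e^{-θt}` solves and whose bounded solutions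
are unique by Gronwall's iteration.
-/

theorem eq_zero_of_abs_le_mul_integral_abs {d : ℝ → ℝ} {θ C A : ℝ} (hθ : 0 ≤ θ)
    (hd : Measurable d) (hC : ∀ t ∈ Icc 0 A, |d t| ≤ C)
    (h : ∀ t ∈ Icc 0 A, |d t| ≤ θ * ∫ s in 0..t, |d s|) :
    ∀ t ∈ Icc 0 A, d t = 0 := by
  have hint : ∀ t ∈ Icc 0 A, IntervalIntegrable (fun s => |d s|) volume 0 t := fun t ht => by
    rw [intervalIntegrable_iff_integrableOn_Icc_of_le ht.1]
    refine Measure.integrableOn_of_bounded (M := C) (by simp) hd.abs.aestronglyMeasurable ?_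
    filter_upwards [ae_restrict_mem measurableSet_Icc] with s hs
    simpa using hC s ⟨hs.1, hs.2.trans ht.2⟩
  have iterate (n : ℕ) : ∀ t ∈ Icc 0 A, |d t| ≤ C * θ ^ n * t ^ n / n.factorial := by
    induction n with
    | zero => simpa using hC
    | succ n ih =>
      intro t ht
      have hmono : ∫ s in 0..t, |d s| ≤ ∫ s in 0..t, C * θ ^ n / n.factorial * s ^ n := by
        refine intervalIntegral.integral_mono_on ht.1 (hint t ht)
          (Continuous.intervalIntegrable (by fun_prop) _ _) fun s hs => ?_
        simpa [mul_div_right_comm] using ih s ⟨hs.1, hs.2.trans ht.2⟩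
      calc |d t| ≤ θ * ∫ s in 0..t, |d s| := h t ht
        _ ≤ θ * ∫ s in 0..t, C * θ ^ n / n.factorial * s ^ n := by gcongr
        _ = C * θ ^ (n + 1) * t ^ (n + 1) / (n + 1).factorial := by
          rw [intervalIntegral.integral_const_mul, integral_pow, Nat.factorial_succ]
          push_cast
          field_simp
          ring
  intro t ht
  have hlim : Tendsto (fun n : ℕ => C * θ ^ n * t ^ n / n.factorial) atTop (𝓝 0) := by
    simpa [mul_assoc, mul_pow, mul_div_assoc] using
      (FloorSemiring.tendsto_pow_div_factorial_atTop (θ * t)).const_mul C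
  exact abs_nonpos_iff.mp (ge_of_tendsto' hlim fun n => iterate n t ht)

theorem cdf_expMeasure_add_mul_integral {θ t : ℝ} (hθ : 0 < θ) (ht : 0 ≤ t) :
    cdf (expMeasure θ) t + θ * ∫ s in 0..t, cdf (expMeasure θ) s = t * θ := by
  have hexp : ∫ s in 0..t, Real.exp (-(θ * s)) = (1 - Real.exp (-(θ * t))) / θ := by
    simp only [← neg_mul]
    rw [intervalIntegral.integral_comp_mul_left (fun s => Real.exp s) (neg_ne_zero.mpr hθ.ne'),
      integral_exp]
    simp only [smul_eq_mul, mul_zero, Real.exp_zero]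
    field_simp
    ring
  have hcdf : ∫ s in 0..t, cdf (expMeasure θ) s = ∫ s in 0..t, (1 - Real.exp (-(θ * s))) := by
    refine intervalIntegral.integral_congr fun s hs => ?_
    rw [uIcc_of_le ht] at hs
    simp [cdf_expMeasure_eq hθ, hs.1]
  rw [hcdf, intervalIntegral.integral_sub (by simp)
    (Continuous.intervalIntegrable (by fun_prop) _ _), hexp, intervalIntegral.integral_const,
    cdf_expMeasure_eq hθ, if_pos ht]
  field_simp
  simp

theorem cdf_eq_zero_of_measure_Iio_zero {μ : Measure ℝ} [IsProbabilityMeasure μ]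
    (hμ : μ (Iio 0) = 0) {t : ℝ} (ht : t < 0) : cdf μ t = 0 := by
  have : μ (Iic t) = 0 := measure_mono_null (Iic_subset_Iio.mpr ht) hμ
  rw [cdf_eq_real, measureReal_def, this, toReal_zero]

theorem eq_expMeasure_iff_cdf_add_mul_integral {μ : Measure ℝ} [IsProbabilityMeasure μ]
    (hμ : μ (Iio 0) = 0) {θ : ℝ} (hθ : 0 < θ) :
    μ = expMeasure θ ↔ ∀ t, 0 ≤ t → cdf μ t + θ * ∫ s in 0..t, cdf μ s = t * θ := by
  refine ⟨fun h t ht => h ▸ cdf_expMeasure_add_mul_integral hθ ht, fun h => ?_⟩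
  have : IsProbabilityMeasure (expMeasure θ) := isProbabilityMeasure_expMeasure hθ
  set d : ℝ → ℝ := fun s => cdf μ s - cdf (expMeasure θ) s
  have hvolterra : ∀ t, 0 ≤ t → d t = -θ * ∫ s in 0..t, d s := fun t ht => by
    have h₁ := h t ht
    have h₂ := cdf_expMeasure_add_mul_integral hθ ht
    rw [intervalIntegral.integral_sub ((cdf μ).mono.intervalIntegrable)
      ((cdf (expMeasure θ)).mono.intervalIntegrable)]
    linarith
  have hd : ∀ t, 0 ≤ t → d t = 0 := fun t ht => by
    refine eq_zero_of_abs_le_mul_integral_abs (d := d) (C := 1) hθ.le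
      ((cdf μ).mono.measurable.sub (cdf (expMeasure θ)).mono.measurable) (fun s _ => ?_)
      (fun s hs => ?_) t ⟨ht, le_rfl⟩
    · have := cdf_nonneg μ s; have := cdf_le_one μ s
      have := cdf_nonneg (expMeasure θ) s; have := cdf_le_one (expMeasure θ) s
      exact abs_sub_le_iff.mpr ⟨by linarith, by linarith⟩
    · rw [hvolterra s hs.1, abs_mul, abs_neg, abs_of_pos hθ]
      exact mul_le_mul_of_nonneg_left (intervalIntegral.abs_integral_le_integral_abs hs.1) hθ.le
  refine Measure.eq_of_cdf μ _ (StieltjesFunction.ext fun t => ?_)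
  rcases le_or_gt 0 t with ht | ht
  · exact sub_eq_zero.mp (hd t ht)
  · rw [cdf_eq_zero_of_measure_Iio_zero hμ ht, cdf_expMeasure_eq hθ, if_neg ht.not_ge]

namespace MeasureTheory.Measure

variable {M : Type*} [AddMonoid M] [MeasurableSpace M]

noncomputable def convPow (μ : Measure M) : ℕ → Measure M
  | 0 => dirac 0
  | n + 1 => convPow μ n ∗ μ

instance [MeasurableAdd₂ M] (μ : Measure M) [SFinite μ] (n : ℕ) : SFinite (μ.convPow n) := by
  induction n with
  | zero => exact inferInstanceAs (SFinite (dirac 0))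
  | succ n ih => exact inferInstanceAs (SFinite (μ.convPow n ∗ μ))

theorem convPow_one [MeasurableAdd₂ M] (μ : Measure M) [SFinite μ] : μ.convPow 1 = μ :=
  dirac_zero_conv μ

theorem conv_apply [MeasurableAdd₂ M] (ν μ : Measure M) [SFinite μ] {s : Set M}
    (hs : MeasurableSet s) : (ν ∗ μ) s = ∫⁻ x, μ ((x + ·) ⁻¹' s) ∂ν := by
  rw [← lintegral_indicator_one hs, lintegral_conv (measurable_one.indicator hs)]
  congr with x
  rw [← lintegral_indicator_one (measurable_const_add x hs)]
  rfl

theorem conv_apply_Iic (ν μ : Measure ℝ) [SFinite μ] (t : ℝ) :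
    (ν ∗ μ) (Iic t) = ∫⁻ x, μ (Iic (t - x)) ∂ν := by
  simp [conv_apply _ _ measurableSet_Iic]

theorem convPow_Iio_zero {μ : Measure ℝ} [SFinite μ] (hμ : μ (Iio 0) = 0) (n : ℕ) :
    μ.convPow n (Iio 0) = 0 := by
  induction n with
  | zero => simp [convPow]
  | succ n ih =>
    rw [convPow, conv_apply _ _ measurableSet_Iio]
    refine lintegral_eq_zero_of_ae_eq_zero ?_
    filter_upwards [measure_eq_zero_iff_ae_notMem.mp ih] with x hx
    refine measure_mono_null (fun y hy => ?_) hμ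
    simp only [mem_Iio, not_lt, mem_preimage] at hx hy ⊢
    linarith

end MeasureTheory.Measure

open Measure

def RenewalEquation (μ : Measure ℝ) (X : ℝ → ℝ≥0∞) : Prop :=
  ∀ t, X t = μ (Iic t) + ∫⁻ y, X (t - y) ∂μ

theorem lintegral_ofReal_sub (μ : Measure ℝ) [SFinite μ] (t : ℝ) :
    ∫⁻ y, ENNReal.ofReal (t - y) ∂μ = ∫⁻ s in Iic t, μ (Iic s) := by
  set S := {p : ℝ × ℝ | p.1 ≤ p.2 ∧ p.2 ≤ t}
  have hS : MeasurableSet S := (measurableSet_le measurable_fst measurable_snd).inter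
    (measurableSet_le measurable_snd measurable_const)
  calc ∫⁻ y, ENNReal.ofReal (t - y) ∂μ = μ.prod volume S := by
        rw [Measure.prod_apply hS]
        congr with y
        rw [show Prod.mk y ⁻¹' S = Icc y t by ext; simp [S], Real.volume_Icc]
    _ = ∫⁻ s, (Iic t).indicator (fun s => μ (Iic s)) s := by
        rw [Measure.prod_apply_symm hS]
        congr with s
        by_cases hs : s ≤ t <;> simp [S, hs, Iic_def]
    _ = _ := lintegral_indicator measurableSet_Iic _

theorem setLIntegral_Iic_measure_Iic {μ : Measure ℝ} [IsProbabilityMeasure μ]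
    (hμ : μ (Iio 0) = 0) {t : ℝ} (ht : 0 ≤ t) :
    ∫⁻ s in Iic t, μ (Iic s) = ENNReal.ofReal (∫ s in 0..t, cdf μ s) := by
  have hneg : ∫⁻ s in Iic 0, μ (Iic s) = 0 := by
    rw [← setLIntegral_congr Iio_ae_eq_Iic]
    refine (setLIntegral_congr_fun measurableSet_Iio fun s hs => ?_).trans (lintegral_zero)
    exact measure_mono_null (Iic_subset_Iio.mpr hs) hμ
  rw [← Iic_union_Ioc_eq_Iic ht, lintegral_union measurableSet_Ioc (Iic_disjoint_Ioc le_rfl), hneg,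
    zero_add, intervalIntegral.integral_of_le ht, ofReal_integral_eq_lintegral_ofReal
      ((cdf μ).mono.intervalIntegrable.1) (ae_of_all _ (cdf_nonneg μ))]
  simp_rw [ofReal_cdf]

theorem renewalEquation_ofReal_mul_iff {μ : Measure ℝ} [IsProbabilityMeasure μ]
    (hμ : μ (Iio 0) = 0) {θ : ℝ} (hθ : 0 ≤ θ) :
    RenewalEquation μ (fun t => ENNReal.ofReal (t * θ)) ↔
      ∀ t, 0 ≤ t → cdf μ t + θ * ∫ s in 0..t, cdf μ s = t * θ := by
  have hrhs (t : ℝ) : μ (Iic t) + ∫⁻ y, ENNReal.ofReal ((t - y) * θ) ∂μ =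
      μ (Iic t) + ENNReal.ofReal θ * ∫⁻ s in Iic t, μ (Iic s) := by
    simp_rw [ENNReal.ofReal_mul' hθ]
    rw [lintegral_mul_const' _ _ ofReal_ne_top, lintegral_ofReal_sub, mul_comm]
  have hint_nonneg {t : ℝ} (ht : 0 ≤ t) : 0 ≤ θ * ∫ s in 0..t, cdf μ s :=
    mul_nonneg hθ (intervalIntegral.integral_nonneg ht fun s _ => cdf_nonneg μ s)
  have hrhs_nonneg {t : ℝ} (ht : 0 ≤ t) : μ (Iic t) + ∫⁻ y, ENNReal.ofReal ((t - y) * θ) ∂μ =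
      ENNReal.ofReal (cdf μ t + θ * ∫ s in 0..t, cdf μ s) := by
    rw [hrhs, setLIntegral_Iic_measure_Iic hμ ht, ← ofReal_cdf, ← ENNReal.ofReal_mul hθ,
      ← ENNReal.ofReal_add (cdf_nonneg μ t) (hint_nonneg ht)]
  refine ⟨fun h t ht => ?_, fun h t => ?_⟩
  · have := h t
    rw [hrhs_nonneg ht, ENNReal.ofReal_eq_ofReal_iff (mul_nonneg ht hθ)
      (add_nonneg (cdf_nonneg μ t) (hint_nonneg ht))] at this
    exact this.symm
  · show ENNReal.ofReal (t * θ) = μ (Iic t) + ∫⁻ y, ENNReal.ofReal ((t - y) * θ) ∂μ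
    rcases le_or_gt 0 t with ht | ht
    · rw [hrhs_nonneg ht, h t ht]
    · have hIic : ∀ s ≤ t, μ (Iic s) = 0 := fun s hs =>
        measure_mono_null (Iic_subset_Iio.mpr (hs.trans_lt ht)) hμ
      rw [hrhs, hIic t le_rfl, setLIntegral_congr_fun measurableSet_Iic hIic,
        ENNReal.ofReal_of_nonpos (mul_nonpos_of_nonpos_of_nonneg ht.le hθ)]
      simp

noncomputable def renewalFunction (μ : Measure ℝ) (t : ℝ) : ℝ≥0∞ :=
  ∑' n, μ.convPow (n + 1) (Iic t)

theorem measurable_measure_Iic_sub (μ : Measure ℝ) (t : ℝ) :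
    Measurable fun y => μ (Iic (t - y)) :=
  Antitone.measurable fun _ _ h => measure_mono (Iic_subset_Iic.mpr (by linarith))

theorem renewalEquation_renewalFunction (μ : Measure ℝ) [SFinite μ] :
    RenewalEquation μ (renewalFunction μ) := by
  intro t
  have hstep (n : ℕ) : μ.convPow (n + 2) (Iic t) = ∫⁻ y, μ.convPow (n + 1) (Iic (t - y)) ∂μ := by
    rw [convPow, conv_comm, conv_apply_Iic]
  rw [renewalFunction, tsum_eq_zero_add' ENNReal.summable, zero_add, convPow_one,
    tsum_congr hstep, ← lintegral_tsum fun n => (measurable_measure_Iic_sub _ t).aemeasurable]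
  rfl

theorem renewalFunction_eq_zero {μ : Measure ℝ} [SFinite μ] (hμ : μ (Iio 0) = 0)
    {t : ℝ} (ht : t < 0) : renewalFunction μ t = 0 :=
  ENNReal.tsum_eq_zero.mpr fun n =>
    measure_mono_null (Iic_subset_Iio.mpr ht) (convPow_Iio_zero hμ (n + 1))

theorem monotone_renewalFunction (μ : Measure ℝ) : Monotone (renewalFunction μ) :=
  fun _ _ h => ENNReal.tsum_le_tsum fun _ => measure_mono (Iic_subset_Iic.mpr h)

theorem renewalFunction_eq_ofReal_mul_iff {μ : Measure ℝ} [SFinite μ]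
    (hμ : μ (Iio 0) = 0) {θ : ℝ} (hθ : 0 < θ) :
    renewalFunction μ = (fun t => ENNReal.ofReal (t * θ)) ↔
      ∀ t, 0 ≤ t → (renewalFunction μ t).toReal = t * θ := by
  refine ⟨fun h t ht => by rw [h, toReal_ofReal (mul_nonneg ht hθ.le)], fun h => funext fun t => ?_⟩
  rcases lt_or_ge t 0 with ht | ht
  · rw [renewalFunction_eq_zero hμ ht, ofReal_of_nonpos (by nlinarith)]
  · -- `toReal ∞ = 0`, so the positive value at `t + 1` rules out `∞` there, and at `t` by
    -- monotonicity
    have hfin : renewalFunction μ (t + 1) ≠ ∞ := fun htop => by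
      have := h (t + 1) (by linarith)
      rw [htop, toReal_top] at this
      nlinarith
    rw [← ofReal_toReal (ne_top_of_le_ne_top hfin (monotone_renewalFunction μ (by linarith))),
      h t ht]

theorem RenewalEquation.lintegral_convPow_eq_add {μ : Measure ℝ} [SFinite μ]
    {X : ℝ → ℝ≥0∞} (hX : RenewalEquation μ X) (hmono : Monotone X) (t : ℝ) (n : ℕ) :
    ∫⁻ x, X (t - x) ∂μ.convPow n =
      μ.convPow (n + 1) (Iic t) + ∫⁻ x, X (t - x) ∂μ.convPow (n + 1) := by
  have hXm : Measurable fun x => X (t - x) :=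
    Antitone.measurable fun _ _ h => hmono (by linarith)
  calc ∫⁻ x, X (t - x) ∂μ.convPow n
      = ∫⁻ x, (μ (Iic (t - x)) + ∫⁻ y, X (t - (x + y)) ∂μ) ∂μ.convPow n := by
        congr with x
        rw [hX (t - x)]
        simp only [sub_sub]
    _ = _ := by
        rw [lintegral_add_left (measurable_measure_Iic_sub μ t), convPow, conv_apply_Iic,
          lintegral_conv hXm]

theorem RenewalEquation.eq_renewalFunction {μ : Measure ℝ} [SFinite μ]
    (hμ : μ (Iio 0) = 0) (htrans : ∀ t, Tendsto (fun n => μ.convPow n (Iic t)) atTop (𝓝 0))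
    {X : ℝ → ℝ≥0∞} (hX : RenewalEquation μ X) (hmono : Monotone X) (hneg : ∀ t < 0, X t = 0)
    (hfin : ∀ t, X t ≠ ∞) : X = renewalFunction μ := by
  funext t
  have hpartial (n : ℕ) : X t = ∑ k ∈ Finset.range n, μ.convPow (k + 1) (Iic t) +
      ∫⁻ x, X (t - x) ∂μ.convPow n := by
    induction n with
    | zero => simp [convPow]
    | succ n ih => rw [ih, hX.lintegral_convPow_eq_add hmono, Finset.sum_range_succ, add_assoc]
  have hrem (n : ℕ) : ∫⁻ x, X (t - x) ∂μ.convPow n ≤ X t * μ.convPow n (Iic t) := by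
    rw [← lintegral_indicator_const measurableSet_Iic]
    refine lintegral_mono_ae ?_
    filter_upwards [measure_eq_zero_iff_ae_notMem.mp (convPow_Iio_zero hμ n)] with x hx
    simp only [mem_Iio, not_lt] at hx
    by_cases hxt : x ≤ t
    · simpa [indicator_of_mem (show x ∈ Iic t from hxt)] using hmono (by linarith : t - x ≤ t)
    · simp [hneg (t - x) (by linarith)]
  have hrem_lim : Tendsto (fun n => ∫⁻ x, X (t - x) ∂μ.convPow n) atTop (𝓝 0) :=
    tendsto_of_tendsto_of_tendsto_of_le_of_le tendsto_const_nhds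
      (by simpa using ENNReal.Tendsto.const_mul (htrans t) (Or.inr (hfin t)))
      (fun _ => zero_le) hrem
  refine tendsto_nhds_unique (f := fun _ : ℕ => X t) (l := atTop) tendsto_const_nhds ?_
  rw [funext hpartial, ← add_zero (renewalFunction μ t)]
  exact ENNReal.tendsto_nat_tsum _ |>.add hrem_lim

theorem natCast_eq_tsum_ite_le {s : ℕ → ℝ} (hs : Monotone s) {n : ℕ} {t : ℝ} (h₁ : s n ≤ t)
    (h₂ : t < s (n + 1)) : (n : ℝ≥0∞) = ∑' k, if s (k + 1) ≤ t then 1 else 0 := by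
  have hiff (k : ℕ) : s (k + 1) ≤ t ↔ k < n := by
    refine ⟨fun hk => ?_, fun hk => (hs hk).trans h₁⟩
    by_contra! hnk
    exact (h₂.trans_le (hs (by omega))).not_ge hk
  simp_rw [hiff]
  rw [tsum_eq_sum (s := Finset.range n) (fun k hk => by simp_all)]
  simp [Finset.filter_true_of_mem fun k => Finset.mem_range.mp]

theorem tendsto_measure_setOf_le_atTop {Ω : Type*} [MeasurableSpace Ω] {P : Measure Ω}
    [IsFiniteMeasure P] {T : ℕ → Ω → ℝ} (hTm : ∀ n, Measurable (T n))
    (hmono : ∀ ω, Monotone (T · ω)) (hunb : ∀ ω M, ∃ n, M < T n ω) (t : ℝ) :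
    Tendsto (fun n => P {ω | T n ω ≤ t}) atTop (𝓝 0) := by
  have hempty : ⋂ n, {ω | T n ω ≤ t} = ∅ := by
    refine eq_empty_of_forall_notMem fun ω hω => ?_
    obtain ⟨n, hn⟩ := hunb ω t
    exact hn.not_ge (mem_iInter.mp hω n)
  simpa [hempty, Function.comp_def] using tendsto_measure_iInter_atTop
    (fun n => (measurableSet_le (hTm n) measurable_const).nullMeasurableSet)
    (fun m n hmn ω (hω : T n ω ≤ t) => (hmono ω hmn).trans hω) ⟨0, measure_ne_top P _⟩

theorem ProbabilityTheory.iIndepFun.map_sum_range_eq_convPow {Ω M : Type*} [MeasurableSpace Ω]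
    [AddCommMonoid M] [MeasurableSpace M] [MeasurableAdd₂ M] {P : Measure Ω}
    [IsProbabilityMeasure P] {X : ℕ → Ω → M} {μ : Measure M} (hind : iIndepFun X P)
    (hXm : ∀ n, Measurable (X n)) (hX : ∀ n, P.map (X n) = μ) (n : ℕ) :
    P.map (∑ k ∈ Finset.range n, X k) = μ.convPow n := by
  induction n with
  | zero => simp [convPow, Pi.zero_def]
  | succ n ih =>
    rw [Finset.sum_range_succ, (hind.indepFun_sum_range_succ hXm n).map_add_eq_map_conv_map
      (by fun_prop) (hXm n), ih, hX]
    rfl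

theorem integral_natCast_eq_renewalFunction {Ω : Type*} [MeasurableSpace Ω] {P : Measure Ω}
    {T : ℕ → Ω → ℝ} {N : ℝ → Ω → ℕ} {μ : Measure ℝ}
    (hTm : ∀ n, Measurable (T n)) (hTmono : ∀ ω, Monotone (T · ω))
    (hlaw : ∀ n, P.map (T n) = μ.convPow n)
    (hN : ∀ t ω, 0 ≤ t → T (N t ω) ω ≤ t ∧ t < T (N t ω + 1) ω) {t : ℝ} (ht : 0 ≤ t) :
    ∫ ω, (N t ω : ℝ) ∂P = (renewalFunction μ t).toReal := by
  have hmeas (k : ℕ) : MeasurableSet {ω | T (k + 1) ω ≤ t} :=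
    measurableSet_le (hTm _) measurable_const
  have hcount : (fun ω => (N t ω : ℝ≥0∞)) = fun ω => ∑' k, {ω | T (k + 1) ω ≤ t}.indicator 1 ω :=
    funext fun ω => by
      simpa [indicator_apply] using natCast_eq_tsum_ite_le (hTmono ω) (hN t ω ht).1 (hN t ω ht).2
  have hlint : ∫⁻ ω, (N t ω : ℝ≥0∞) ∂P = renewalFunction μ t := by
    rw [hcount, lintegral_tsum fun k => (measurable_one.indicator (hmeas k)).aemeasurable]
    refine tsum_congr fun k => ?_
    rw [lintegral_indicator_one (hmeas k), ← hlaw, map_apply (hTm _) measurableSet_Iic]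
    rfl
  have hNm : Measurable fun ω => (N t ω : ℝ≥0∞) :=
    hcount ▸ Measurable.tsum fun k => measurable_one.indicator (hmeas k)
  rw [← hlint, ← integral_toReal hNm.aemeasurable (ae_of_all _ fun _ => natCast_lt_top _)]
  simp

theorem stmt_10_general {Ω : Type*} [MeasurableSpace Ω]
    (P : Measure Ω) [IsProbabilityMeasure P]
    (W : ℕ → Ω → ℝ) (hWm : ∀ n, Measurable (W n)) (hWpos : ∀ n ω, 0 < W n ω)
    (hWind : iIndepFun W P)
    (hWid : ∀ n, P.map (W n) = P.map (W 0))
    (T : ℕ → Ω → ℝ) (hT : ∀ n ω, T n ω = ∑ k ∈ Finset.range n, W k ω)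
    (hTunb : ∀ ω M, ∃ n, M < T n ω)
    (N : ℝ → Ω → ℕ)
    (hN : ∀ t ω, 0 ≤ t → T (N t ω) ω ≤ t ∧ t < T (N t ω + 1) ω)
    (θ : ℝ) (hθ : 0 < θ) :
    (∀ n, P.map (W n) = expMeasure θ) ↔
      (∀ t : ℝ, 0 ≤ t → ∫ ω, (N t ω : ℝ) ∂P = t * θ) := by
  set μ := P.map (W 0)
  have : IsProbabilityMeasure μ := isProbabilityMeasure_map (hWm 0).aemeasurable
  have hμ : μ (Iio 0) = 0 := by
    rw [map_apply (hWm 0) measurableSet_Iio]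
    exact measure_mono_null (fun ω (hω : W 0 ω < 0) => (hWpos 0 ω).not_gt hω) measure_empty
  have hTsum (n : ℕ) : T n = ∑ k ∈ Finset.range n, W k := funext fun ω => by simp [hT]
  have hTm (n : ℕ) : Measurable (T n) := hTsum n ▸ by fun_prop
  have hTmono (ω : Ω) : Monotone (T · ω) := monotone_nat_of_le_succ fun n => by
    simp [hT, Finset.sum_range_succ, (hWpos n ω).le]
  have hlaw (n : ℕ) : P.map (T n) = μ.convPow n :=
    hTsum n ▸ hWind.map_sum_range_eq_convPow hWm hWid n
  have htrans (t : ℝ) : Tendsto (fun n => μ.convPow n (Iic t)) atTop (𝓝 0) := by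
    refine (tendsto_measure_setOf_le_atTop (P := P) hTm hTmono hTunb t).congr fun n => ?_
    rw [← hlaw, map_apply (hTm n) measurableSet_Iic]
    rfl
  have hL_mono : Monotone fun t => ENNReal.ofReal (t * θ) :=
    fun _ _ h => ENNReal.ofReal_le_ofReal (by gcongr)
  calc (∀ n, P.map (W n) = expMeasure θ) ↔ μ = expMeasure θ :=
        ⟨fun h => h 0, fun h n => (hWid n).trans h⟩
    _ ↔ RenewalEquation μ (fun t => ENNReal.ofReal (t * θ)) := by
        rw [renewalEquation_ofReal_mul_iff hμ hθ.le, eq_expMeasure_iff_cdf_add_mul_integral hμ hθ]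
    _ ↔ renewalFunction μ = fun t => ENNReal.ofReal (t * θ) :=
        ⟨fun h => (h.eq_renewalFunction hμ htrans hL_mono
          (fun t ht => ofReal_of_nonpos (by nlinarith)) fun _ => ofReal_ne_top).symm,
          fun h => h ▸ renewalEquation_renewalFunction μ⟩
    _ ↔ ∀ t, 0 ≤ t → ∫ ω, (N t ω : ℝ) ∂P = t * θ := by
        rw [renewalFunction_eq_ofReal_mul_iff hμ hθ]
        exact forall₂_congr fun t ht => by
          rw [integral_natCast_eq_renewalFunction hTm hTmono hlaw hN ht]

/-- a renewal process `N` (with all moments finite) is a Poisson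
process with parameter `θ > 0` — i.e. its i.i.d. interarrival times are
`Exp(θ)`-distributed — if and only if `E[N_t] = tθ` for every `t ≥ 0`. -/
theorem stmt_10 {Ω : Type*} [MeasurableSpace Ω]
    (P : Measure Ω) [IsProbabilityMeasure P]
    (W : ℕ → Ω → ℝ) (hWm : ∀ n, Measurable (W n)) (hWpos : ∀ n ω, 0 < W n ω)
    (hWind : iIndepFun W P)
    (hWid : ∀ n, P.map (W n) = P.map (W 0))
    (T : ℕ → Ω → ℝ) (hT : ∀ n ω, T n ω = ∑ k ∈ Finset.range n, W k ω)
    (hTunb : ∀ ω M, ∃ n, M < T n ω)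
    (N : ℝ → Ω → ℕ)
    (hN : ∀ t ω, 0 ≤ t → T (N t ω) ω ≤ t ∧ t < T (N t ω + 1) ω)
    (hmom : ∀ t : ℝ, 0 ≤ t → ∀ m : ℕ, Integrable (fun ω => (N t ω : ℝ) ^ m) P)
    (θ : ℝ) (hθ : 0 < θ) :
    (∀ n, P.map (W n) = expMeasure θ) ↔
      (∀ t : ℝ, 0 ≤ t → ∫ ω, (N t ω : ℝ) ∂P = t * θ) :=
  stmt_10_general P W hWm hWpos hWind hWid T hT hTunb N hN θ hθ
end
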